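/- arXiv:1707.05892 — 6 statements merged into one kernel-verified Lean document; each statement's English description precedes it below -/
import Mathlib

section
/- (Karlsson–Margulis) Let (X,μ,f) be an ergodic measure-preserving system on a probability space and let (a_n) be a subadditive cocycle over f with each a_n integrable, whose exponent λ = lim_{n→∞} (1/n)∫a_n dμ satisfies λ > −∞. Then there exists a set E ⊆ X with μ(E) = 1 such that for each x ∈ E and each ε > 0 there is an integer L = L(x,ε) for which the set of integers n satisfying a_n(x) − a_{n−i}(f^i x) ≥ (λ − ε)·i for all integers i with L ≤ i ≤ n is infinite. -/
/-!
Subadditivity makes `∫ a_n ≥ λ n`. Fix `c < d < λ` and put `b_n = a_n - d n`, so that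
`∫ b_N ≥ (λ - d) N`. Call `j` a record of `y` if `b_j y ≥ b_{j-i} (f^i y)` for all `i ≤ j`.
Along `m ↦ b_m (f^{N-m} x)` a new maximum can only be reached at a record `j` of `f^{N-j} x`,
and then by at most `b_1⁺ (f^{N-j} x)`; integrating gives `(λ - d) N ≤ ∑_{j ≤ N} ∫_{R_j} b_1⁺`,
where `R_j` is the set of points of which `j` is a record. If almost no point had infinitely
many records, `∫_{R_j} b_1⁺ → 0` and these Cesàro sums could not grow linearly. So infinitely
many records occur on a set of positive measure. Records of `x` are, up to finitely many `i`,
good times at the lower level `c` for every `f^m x`, and ergodicity spreads this set of positive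
measure to a set of full measure.
-/

open MeasureTheory Filter Topology Finset

theorem le_sum_indicator_records {c h : ℕ → ℝ} (hc0 : c 0 ≤ 0) (hh : 0 ≤ h) {n : ℕ}
    (hstep : ∀ j < n, c (j + 1) ≤ c j + h (j + 1)) :
    ∀ m ≤ n, c m ≤ ∑ j ∈ range (n + 1), {j | ∀ m ≤ j, c m ≤ c j}.indicator h j := by
  set R := {j | ∀ m ≤ j, c m ≤ c j}
  have hR : ∀ j, 0 ≤ R.indicator h j := Set.indicator_nonneg fun j _ ↦ hh j
  induction n with
  | zero =>
    intro m hm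
    simpa [Nat.le_zero.mp hm] using hc0.trans (hR 0)
  | succ n ih =>
    have ih' : ∀ m ≤ n, c m ≤ ∑ j ∈ range (n + 1 + 1), R.indicator h j := fun m hm ↦ by
      rw [sum_range_succ]
      linarith [ih (fun j hj ↦ hstep j (by omega)) m hm, hR (n + 1)]
    intro m hm
    rcases Nat.lt_or_eq_of_le hm with hm | rfl
    · exact ih' m (by omega)
    by_cases hrec : n + 1 ∈ R
    · rw [sum_range_succ, Set.indicator_of_mem hrec]
      linarith [hstep n n.lt_succ_self, ih (fun j hj ↦ hstep j (by omega)) n le_rfl]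
    · obtain ⟨m', hm', hlt⟩ : ∃ m' ≤ n + 1, c (n + 1) < c m' := by
        simpa [R] using hrec
      rcases Nat.lt_or_eq_of_le hm' with hm' | rfl
      · exact hlt.le.trans (ih' m' (by omega))
      · exact (lt_irrefl _ hlt).elim

theorem Subadditive.mul_le_of_tendsto {u : ℕ → ℝ} {l : ℝ} (hu : Subadditive u)
    (hlim : Tendsto (fun n : ℕ ↦ (n : ℝ)⁻¹ * u n) atTop (𝓝 l)) (n : ℕ) : l * n ≤ u n := by
  have hlim' : Tendsto (fun n : ℕ ↦ u n / n) atTop (𝓝 l) := by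
    simpa only [inv_mul_eq_div] using hlim
  have hbdd := hlim'.bddBelow_range
  rcases Nat.eq_zero_or_pos n with rfl | hn
  · have := hu 0 0
    rw [add_zero] at this
    rw [Nat.cast_zero, mul_zero]
    linarith
  · have hl : l = hu.lim := tendsto_nhds_unique hlim' (hu.tendsto_lim hbdd)
    have := hu.lim_le_div hbdd hn.ne'
    rw [← hl, le_div_iff₀ (by exact_mod_cast hn)] at this
    exact this

theorem le_of_tendsto_of_mul_le_sum {u : ℕ → ℝ} {l c : ℝ} (hu : Tendsto u atTop (𝓝 l))
    (h : ∀ N : ℕ, c * N ≤ ∑ j ∈ range (N + 1), u j) : c ≤ l := by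
  have hmean : Tendsto (fun N : ℕ ↦ ((N + 1 : ℕ) : ℝ)⁻¹ * ∑ j ∈ range (N + 1), u j) atTop (𝓝 l) :=
    hu.cesaro.comp (tendsto_add_atTop_nat 1)
  have hc : Tendsto (fun N : ℕ ↦ ((N + 1 : ℕ) : ℝ)⁻¹ * (c * N)) atTop (𝓝 c) := by
    have := (tendsto_natCast_div_add_atTop (1 : ℝ)).const_mul c
    rw [mul_one] at this
    refine this.congr fun N ↦ ?_
    push_cast
    ring
  refine le_of_tendsto_of_tendsto' hc hmean fun N ↦ ?_
  exact mul_le_mul_of_nonneg_left (h N) (by positivity)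

section Measure

variable {X : Type*} [MeasurableSpace X] {μ : Measure X}

theorem tendsto_setIntegral_of_measure_limsup_eq_zero {E : Type*} [NormedAddCommGroup E]
    [NormedSpace ℝ E] [IsFiniteMeasure μ] {s : ℕ → Set X} (hs : ∀ n, NullMeasurableSet (s n) μ)
    (h : μ (limsup s atTop) = 0) {g : X → E} (hg : Integrable g μ) :
    Tendsto (fun n ↦ ∫ x in s n, g x ∂μ) atTop (𝓝 0) := by
  refine hg.tendsto_setIntegral_nhds_zero ?_
  have htail : Tendsto (fun n ↦ μ (⋃ i ≥ n, s i)) atTop (𝓝 0) := by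
    rw [← h, limsup_eq_iInf_iSup_of_nat]
    refine tendsto_measure_iInter_atTop (fun n ↦ .biUnion (Set.to_countable _) fun i _ ↦ hs i)
      (fun m n hmn ↦ Set.biUnion_mono (fun i hi ↦ le_trans hmn hi) fun _ _ ↦ le_rfl)
      ⟨0, measure_ne_top μ _⟩
  exact tendsto_of_tendsto_of_tendsto_of_le_of_le tendsto_const_nhds htail (fun _ ↦ zero_le)
    fun n ↦ measure_mono (Set.subset_biUnion_of_mem (u := s) (le_refl n))

theorem MeasureTheory.MeasurePreserving.integral_comp_of_aestronglyMeasurable {E : Type*}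
    [NormedAddCommGroup E] [NormedSpace ℝ E] {Y : Type*} [MeasurableSpace Y] {ν : Measure Y}
    {g : X → Y} (hg : MeasurePreserving g μ ν) {φ : Y → E} (hφ : AEStronglyMeasurable φ ν) :
    ∫ x, φ (g x) ∂μ = ∫ y, φ y ∂ν := by
  rw [← integral_map hg.measurable.aemeasurable (hg.map_eq ▸ hφ), hg.map_eq]

theorem nullMeasurableSet_setOf_frequently {p : ℕ → X → Prop}
    (hp : ∀ n, NullMeasurableSet {x | p n x} μ) :
    NullMeasurableSet {x | ∃ᶠ n in atTop, p n x} μ := by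
  have : {x | ∃ᶠ n in atTop, p n x} = ⋂ M, ⋃ n ≥ M, {x | p n x} := by
    ext; simp [frequently_atTop]
  rw [this]
  exact .iInter fun M ↦ .biUnion (Set.to_countable _) fun n _ ↦ hp n

theorem Ergodic.ae_mem_of_forall_iterate_mem [IsFiniteMeasure μ] {f : X → X}
    (hf : Ergodic f μ) {s t : Set X} (hs : NullMeasurableSet s μ) (ht : μ t ≠ 0)
    (hts : ∀ x ∈ t, ∀ m, f^[m] x ∈ s) : ∀ᵐ x ∂μ, x ∈ s := by
  set u := ⋂ m, f^[m] ⁻¹' s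
  have hu : NullMeasurableSet u μ :=
    .iInter fun m ↦ hs.preimage (hf.quasiMeasurePreserving.iterate m)
  have hinv : u ⊆ f ⁻¹' u := fun x hx ↦ Set.mem_iInter.2 fun m ↦ by
    simpa only [Set.mem_preimage, Function.iterate_succ_apply] using Set.mem_iInter.1 hx (m + 1)
  rcases hf.ae_empty_or_univ_of_ae_le_preimage hu hinv.eventuallyLE with h | h
  · exact absurd (measure_mono_null (fun x hx ↦ Set.mem_iInter.2 (hts x hx)) (ae_eq_empty.1 h)) ht
  · exact h.mem_iff.mono fun x hx ↦ Set.mem_iInter.1 (hx.2 trivial) 0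

end Measure

section Cocycle

variable {X : Type*}

def IsSubadditiveCocycle (f : X → X) (a : ℕ → X → ℝ) : Prop :=
  ∀ x k n, a (n + k) x ≤ a k x + a n (f^[k] x)

def IsGoodTime (a : ℕ → X → ℝ) (f : X → X) (c : ℝ) (L : ℕ) (x : X) (n : ℕ) : Prop :=
  ∀ i, L ≤ i → i ≤ n → c * i ≤ a n x - a (n - i) (f^[i] x)

variable {f : X → X} {a : ℕ → X → ℝ}

theorem IsSubadditiveCocycle.sub_mul (ha : IsSubadditiveCocycle f a) (c : ℝ) :
    IsSubadditiveCocycle f fun n x ↦ a n x - c * n := fun x k n ↦ by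
  have := ha x k n
  push_cast
  linarith

theorem isGoodTime_sub_mul_iff {c d : ℝ} {L : ℕ} {x : X} {n : ℕ} :
    IsGoodTime (fun n x ↦ a n x - c * n) f d L x n ↔ IsGoodTime a f (c + d) L x n := by
  refine forall₃_congr fun i _ hin ↦ ?_
  simp only [Nat.cast_sub hin]
  constructor <;> intro h <;> linarith

theorem IsGoodTime.mono {c d : ℝ} {L : ℕ} {x : X} {n : ℕ} (h : IsGoodTime a f d L x n)
    (hcd : c ≤ d) : IsGoodTime a f c L x n := fun i hLi hin ↦
  (mul_le_mul_of_nonneg_right hcd i.cast_nonneg).trans (h i hLi hin)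

theorem IsSubadditiveCocycle.frequently_isGoodTime_iterate (ha : IsSubadditiveCocycle f a)
    {c d : ℝ} (hcd : c < d) {L : ℕ} {x : X} (hx : ∃ᶠ n in atTop, IsGoodTime a f d L x n)
    (m : ℕ) : ∃ L', ∃ᶠ n in atTop, IsGoodTime a f c L' (f^[m] x) n := by
  -- Passing from `x` to `f^m x` costs at most `a_m x - d m`, absorbed by `(d - c) i` once `i ≥ K`.
  obtain ⟨K, hK⟩ := exists_nat_ge ((a m x - d * m) / (d - c))
  refine ⟨max L K, frequently_atTop.2 fun M ↦ ?_⟩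
  obtain ⟨n, hn, hgood⟩ := frequently_atTop.1 hx (M + m)
  refine ⟨n - m, by omega, fun i hi hin ↦ ?_⟩
  have hxn := hgood (i + m) (by omega) (by omega)
  have hsplit : a n x ≤ a m x + a (n - m) (f^[m] x) := by
    simpa [Nat.sub_add_cancel (show m ≤ n by omega)] using ha x m (n - m)
  have hiter : a (n - (i + m)) (f^[i + m] x) = a (n - m - i) (f^[i] (f^[m] x)) := by
    rw [Function.iterate_add_apply]; congr 1; omega
  have hKi : a m x - d * m ≤ (d - c) * i := by
    rw [div_le_iff₀ (sub_pos.2 hcd)] at hK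
    have : (K : ℝ) ≤ i := by exact_mod_cast (le_max_right L K).trans hi
    nlinarith
  push_cast at hxn
  rw [hiter] at hxn
  linarith

theorem IsSubadditiveCocycle.le_sum_indicator_isGoodTime (ha : IsSubadditiveCocycle f a)
    (ha0 : ∀ x, a 0 x = 0) (N : ℕ) (x : X) :
    a N x ≤ ∑ j ∈ range (N + 1),
      {y | IsGoodTime a f 0 0 y j}.indicator (fun y ↦ max (a 1 y) 0) (f^[N - j] x) := by
  set c : ℕ → ℝ := fun m ↦ a m (f^[N - m] x)
  have hiter : ∀ i j, i ≤ j → j ≤ N → f^[i] (f^[N - j] x) = f^[N - (j - i)] x := fun i j _ _ ↦ by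
    rw [← Function.iterate_add_apply]; congr 1; omega
  have hstep : ∀ j < N, c (j + 1) ≤ c j + max (a 1 (f^[N - (j + 1)] x)) 0 := fun j hj ↦ by
    have := ha (f^[N - (j + 1)] x) 1 j
    rw [hiter 1 (j + 1) (by omega) hj, Nat.add_sub_cancel] at this
    linarith [le_max_left (a 1 (f^[N - (j + 1)] x)) 0]
  have hrec : ∀ j ≤ N,
      j ∈ {j | ∀ m ≤ j, c m ≤ c j} ↔ f^[N - j] x ∈ {y | IsGoodTime a f 0 0 y j} :=
    fun j hj ↦ by
    refine ⟨fun h i _ hij ↦ ?_, fun h m hm ↦ ?_⟩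
    · have := h (j - i) (Nat.sub_le j i)
      rw [hiter i j hij hj]
      simp only [c] at this
      linarith
    · have := h (j - m) (Nat.zero_le _) (Nat.sub_le j m)
      rw [hiter (j - m) j (Nat.sub_le j m) hj, Nat.sub_sub_self hm] at this
      simp only [c]
      linarith
  calc a N x = c N := by simp [c]
    _ ≤ ∑ j ∈ range (N + 1), {j | ∀ m ≤ j, c m ≤ c j}.indicator
          (fun j ↦ max (a 1 (f^[N - j] x)) 0) j :=
        le_sum_indicator_records (by simp [c, ha0]) (fun j ↦ le_max_right _ _) hstep N le_rfl
    _ = _ := sum_congr rfl fun j hj ↦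
        Set.indicator_eq_indicator (hrec j (Nat.lt_succ_iff.mp (mem_range.mp hj))) rfl

variable [MeasurableSpace X] {μ : Measure X}

theorem nullMeasurableSet_isGoodTime (hf : Measure.QuasiMeasurePreserving f μ μ)
    (ha : ∀ n, AEMeasurable (a n) μ) (c : ℝ) (L n : ℕ) :
    NullMeasurableSet {x | IsGoodTime a f c L x n} μ := by
  have : {x | IsGoodTime a f c L x n} =
      ⋂ i ∈ Set.Icc L n, {x | c * i ≤ a n x - a (n - i) (f^[i] x)} := by
    ext; simp [IsGoodTime, and_imp]
  rw [this]
  exact .biInter (Set.to_countable _) fun i _ ↦ nullMeasurableSet_le aemeasurable_const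
    ((ha n).sub ((ha (n - i)).comp_quasiMeasurePreserving (hf.iterate i)))

theorem IsSubadditiveCocycle.subadditive_integral (ha : IsSubadditiveCocycle f a)
    (hf : MeasurePreserving f μ μ) (hint : ∀ n, Integrable (a n) μ) :
    Subadditive fun n ↦ ∫ x, a n x ∂μ := fun m n ↦ by
  have hcomp : Integrable (fun x ↦ a m (f^[n] x)) μ :=
    ((hf.iterate n).integrable_comp (hint m).aestronglyMeasurable).2 (hint m)
  calc ∫ x, a (m + n) x ∂μ ≤ ∫ x, (a n x + a m (f^[n] x)) ∂μ :=
        integral_mono (hint _) ((hint n).add hcomp) fun x ↦ ha x n m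
    _ = ∫ x, a m x ∂μ + ∫ x, a n x ∂μ := by
        rw [integral_add (hint n) hcomp, add_comm,
          (hf.iterate n).integral_comp_of_aestronglyMeasurable (hint m).aestronglyMeasurable]

theorem IsSubadditiveCocycle.integral_le_sum_setIntegral_isGoodTime
    (ha : IsSubadditiveCocycle f a) (ha0 : ∀ x, a 0 x = 0) (hf : MeasurePreserving f μ μ)
    (hint : ∀ n, Integrable (a n) μ) (N : ℕ) :
    ∫ x, a N x ∂μ ≤
      ∑ j ∈ range (N + 1), ∫ y in {y | IsGoodTime a f 0 0 y j}, max (a 1 y) 0 ∂μ := by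
  have hG : ∀ j, NullMeasurableSet {y | IsGoodTime a f 0 0 y j} μ := fun j ↦
    nullMeasurableSet_isGoodTime hf.quasiMeasurePreserving (fun n ↦ (hint n).aemeasurable) 0 0 j
  have hterm : ∀ j k, Integrable
      (fun x ↦ {y | IsGoodTime a f 0 0 y j}.indicator (fun y ↦ max (a 1 y) 0) (f^[k] x)) μ :=
    fun j k ↦ ((hf.iterate k).integrable_comp
      ((hint 1).pos_part.indicator₀ (hG j)).aestronglyMeasurable).2
        ((hint 1).pos_part.indicator₀ (hG j))
  calc ∫ x, a N x ∂μ ≤ ∫ x, ∑ j ∈ range (N + 1),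
        {y | IsGoodTime a f 0 0 y j}.indicator (fun y ↦ max (a 1 y) 0) (f^[N - j] x) ∂μ :=
        integral_mono (hint N) (integrable_finsetSum _ fun j _ ↦ hterm j _)
          (ha.le_sum_indicator_isGoodTime ha0 N)
    _ = _ := by
        rw [integral_finsetSum _ fun j _ ↦ hterm j _]
        refine sum_congr rfl fun j _ ↦ ?_
        rw [(hf.iterate _).integral_comp_of_aestronglyMeasurable
          ((hint 1).pos_part.indicator₀ (hG j)).aestronglyMeasurable, integral_indicator₀ (hG j)]

theorem IsSubadditiveCocycle.measure_frequently_isGoodTime_ne_zero [IsFiniteMeasure μ]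
    (ha : IsSubadditiveCocycle f a) (ha0 : ∀ x, a 0 x = 0) (hf : MeasurePreserving f μ μ)
    (hint : ∀ n, Integrable (a n) μ) {ε : ℝ} (hε : 0 < ε)
    (hgrowth : ∀ N : ℕ, ε * N ≤ ∫ x, a N x ∂μ) :
    μ {x | ∃ᶠ n in atTop, IsGoodTime a f 0 0 x n} ≠ 0 := by
  intro h0
  have hlimsup : limsup (fun n ↦ {x | IsGoodTime a f 0 0 x n}) atTop =
      {x | ∃ᶠ n in atTop, IsGoodTime a f 0 0 x n} := Set.ext fun _ ↦ mem_limsup_iff_frequently_mem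
  have hlim := tendsto_setIntegral_of_measure_limsup_eq_zero
    (nullMeasurableSet_isGoodTime hf.quasiMeasurePreserving (fun n ↦ (hint n).aemeasurable) 0 0)
    (hlimsup ▸ h0) (hint 1).pos_part
  have := le_of_tendsto_of_mul_le_sum hlim fun N ↦
    (hgrowth N).trans (ha.integral_le_sum_setIntegral_isGoodTime ha0 hf hint N)
  linarith

theorem Ergodic.ae_exists_frequently_isGoodTime [IsProbabilityMeasure μ] (hf : Ergodic f μ)
    (ha : IsSubadditiveCocycle f a) (ha0 : ∀ x, a 0 x = 0) (hint : ∀ n, Integrable (a n) μ)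
    {l : ℝ} (hl : ∀ n : ℕ, l * n ≤ ∫ x, a n x ∂μ) {c : ℝ} (hc : c < l) :
    ∀ᵐ x ∂μ, ∃ L, ∃ᶠ n in atTop, IsGoodTime a f c L x n := by
  obtain ⟨d, hcd, hdl⟩ := exists_between hc
  have hpos : μ {x | ∃ᶠ n in atTop, IsGoodTime (fun n x ↦ a n x - d * n) f 0 0 x n} ≠ 0 := by
    refine (ha.sub_mul d).measure_frequently_isGoodTime_ne_zero (by simp [ha0])
      hf.toMeasurePreserving (fun n ↦ (hint n).sub (integrable_const _))
      (sub_pos.2 hdl) fun N ↦ ?_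
    rw [integral_sub (hint N) (integrable_const _), integral_const, probReal_univ, one_smul]
    linarith [hl N]
  have hs : NullMeasurableSet {x | ∃ L, ∃ᶠ n in atTop, IsGoodTime a f c L x n} μ := by
    rw [Set.ofPred_exists]
    exact .iUnion fun L ↦ nullMeasurableSet_setOf_frequently fun n ↦
      nullMeasurableSet_isGoodTime hf.quasiMeasurePreserving (fun n ↦ (hint n).aemeasurable) c L n
  refine hf.ae_mem_of_forall_iterate_mem hs hpos fun x hx m ↦
    ha.frequently_isGoodTime_iterate hcd (L := 0) (Frequently.mono hx fun n hn ↦ ?_) m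
  simpa only [isGoodTime_sub_mul_iff, add_zero] using hn

end Cocycle

/-- Karlsson–Margulis: for an integrable subadditive cocycle `(a_n)` over an
ergodic measure-preserving system with finite exponent `λ = lim (1/n)∫a_n dμ`, there is a
full-measure set `E` such that for every `x ∈ E` and `ε > 0` there is `L` for which the set
of `n` satisfying `a_n(x) − a_{n−i}(f^i x) ≥ (λ − ε)·i` for all `L ≤ i ≤ n` is infinite. -/
theorem karlsson_margulis {X : Type*} [MeasurableSpace X]
    (μ : Measure X) [IsProbabilityMeasure μ] (f : X → X) (hf : Ergodic f μ)
    (a : ℕ → X → ℝ) (ha0 : ∀ x, a 0 x = 0)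
    (hsub : ∀ (x : X) (k n : ℕ), a (n + k) x ≤ a k x + a n (f^[k] x))
    (hint : ∀ n, Integrable (a n) μ) (lam : ℝ)
    (hlam : Tendsto (fun n : ℕ => (n : ℝ)⁻¹ * ∫ x, a n x ∂μ) atTop (nhds lam)) :
    ∃ E : Set X, MeasurableSet E ∧ μ E = 1 ∧
      ∀ x ∈ E, ∀ ε > (0 : ℝ), ∃ L : ℕ,
        {n : ℕ | ∀ i : ℕ, L ≤ i → i ≤ n →
          (lam - ε) * (i : ℝ) ≤ a n x - a (n - i) (f^[i] x)}.Infinite := by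
  have ha : IsSubadditiveCocycle f a := hsub
  have hl : ∀ n : ℕ, lam * n ≤ ∫ x, a n x ∂μ :=
    (ha.subadditive_integral hf.toMeasurePreserving hint).mul_le_of_tendsto hlam
  have hgood : ∀ᵐ x ∂μ, ∀ k : ℕ, ∃ L, ∃ᶠ n in atTop,
      IsGoodTime a f (lam - 1 / (k + 1)) L x n :=
    ae_all_iff.2 fun k ↦ hf.ae_exists_frequently_isGoodTime ha ha0 hint hl
      (by linarith [Nat.one_div_pos_of_nat (α := ℝ) (n := k)])
  obtain ⟨E, hE, hEm, hEgood⟩ := hgood.exists_measurable_mem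
  refine ⟨E, hEm, (prob_compl_eq_zero_iff hEm).1 (mem_ae_iff.1 hE), fun x hx ε hε ↦ ?_⟩
  obtain ⟨k, hk⟩ := exists_nat_one_div_lt hε
  obtain ⟨L, hL⟩ := hEgood x hx k
  exact ⟨L, Nat.frequently_atTop_iff_infinite.1 (hL.mono fun n hn ↦ hn.mono (by linarith))⟩
end

section
/- Let (X,dist) be a metric space, f : X → X a map, G ⊆ X, and x ∈ X a point such that for every r > 0 there exists t > 0 with (1/n)·|{ i : 0 ≤ i ≤ n−1 and f^i x ∈ G ∩ B(x,r) }| → t as n → ∞, where B(x,r) is the open ball of radius r about x. Then for every β > 0 and every σ > 0 there exists an integer N such that for each integer n ≥ N there is an integer k satisfying n(1+σ) ≤ k ≤ n(1+2σ), f^k x ∈ G, and dist(x, f^k x) < β. -/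
open Filter Metric Topology

/-! The visits of the orbit to `G ∩ B(x, β)` have a positive density `t`, so the number of such
visits before time `m` is `t m + o(m)`. Between the times `n(1+σ)` and `n(1+2σ)` this count
therefore grows by about `t σ n → ∞`, and any visit in that window is a good return time. -/

theorem tendsto_comp_nat_floor_mul_div {u : ℕ → ℝ} {t c : ℝ}
    (hu : Tendsto (fun n : ℕ => u n / n) atTop (𝓝 t)) (hc : 0 < c) :
    Tendsto (fun n : ℕ => u ⌊c * n⌋₊ / n) atTop (𝓝 (t * c)) := by
  have hfloor : Tendsto (fun n : ℕ => ⌊c * n⌋₊) atTop atTop := tendsto_nat_floor_mul_atTop c hc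
  have hratio : Tendsto (fun n : ℕ => (⌊c * n⌋₊ : ℝ) / n) atTop (𝓝 c) :=
    (tendsto_nat_floor_mul_div_atTop hc.le).comp tendsto_natCast_atTop_atTop
  refine ((hu.comp hfloor).mul hratio).congr' ?_
  filter_upwards [hfloor.eventually_ne_atTop 0] with n hn
  simp only [Function.comp_apply]
  rw [div_mul_div_cancel₀ (Nat.cast_ne_zero.mpr hn)]

theorem Nat.eventually_exists_between_mul_of_tendsto_count_div {p : ℕ → Prop} [DecidablePred p]
    {t : ℝ} (ht : 0 < t) (hp : Tendsto (fun n : ℕ => (Nat.count p n : ℝ) / n) atTop (𝓝 t))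
    {a b : ℝ} (ha : 0 < a) (hab : a < b) :
    ∀ᶠ n : ℕ in atTop, ∃ k : ℕ, (n : ℝ) * a < k ∧ (k : ℝ) < n * b ∧ p k := by
  have hlow : Tendsto (fun n : ℕ => ((Nat.count p ⌊a * n⌋₊ : ℝ) + 1) / n) atTop (𝓝 (t * a)) := by
    simpa only [add_div, add_zero] using (tendsto_comp_nat_floor_mul_div hp ha).add
      (tendsto_one_div_atTop_nhds_zero_nat (𝕜 := ℝ))
  have hhigh := tendsto_comp_nat_floor_mul_div hp (ha.trans hab)
  filter_upwards [hlow.eventually_lt hhigh (mul_lt_mul_of_pos_left hab ht),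
    eventually_gt_atTop 0] with n hlt hn
  have hcount : Nat.count p (⌊a * n⌋₊ + 1) < Nat.count p ⌊b * n⌋₊ := by
    have hsucc : Nat.count p (⌊a * n⌋₊ + 1) ≤ Nat.count p ⌊a * n⌋₊ + 1 := by
      rw [Nat.count_succ]; split_ifs <;> omega
    have : Nat.count p ⌊a * n⌋₊ + 1 < Nat.count p ⌊b * n⌋₊ := by
      exact_mod_cast (div_lt_div_iff_of_pos_right (Nat.cast_pos.mpr hn)).mp hlt
    omega
  obtain ⟨k, ⟨hak, hkb⟩, hpk⟩ := Nat.exists_of_count_lt_count hcount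
  refine ⟨k, ?_, ?_, hpk⟩
  · rw [mul_comm]
    exact (Nat.lt_floor_add_one _).trans_le (by exact_mod_cast hak)
  · rw [mul_comm]
    exact Nat.lt_of_lt_floor hkb

open scoped Classical in
/-- if the orbit of `x` visits `G ∩ B(x,r)` with positive asymptotic frequency
for every `r > 0`, then for all `β > 0` and `σ > 0` there is `N` such that for every
`n ≥ N` there is `k` with `n(1+σ) ≤ k ≤ n(1+2σ)`, `f^k x ∈ G` and `dist(x, f^k x) < β`. -/
theorem good_return_times {X : Type*} [MetricSpace X] (f : X → X) (G : Set X) (x : X)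
    (hx : ∀ r > (0 : ℝ), ∃ t > (0 : ℝ),
      Tendsto (fun n : ℕ => (n : ℝ)⁻¹ *
        (((Finset.range n).filter (fun i => f^[i] x ∈ G ∩ Metric.ball x r)).card : ℝ))
        atTop (nhds t)) :
    ∀ β > (0 : ℝ), ∀ σ > (0 : ℝ), ∃ N : ℕ, ∀ n : ℕ, N ≤ n → ∃ k : ℕ,
      (n : ℝ) * (1 + σ) ≤ (k : ℝ) ∧ (k : ℝ) ≤ (n : ℝ) * (1 + 2 * σ) ∧
      f^[k] x ∈ G ∧ dist x (f^[k] x) < β := by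
  intro β hβ σ hσ
  obtain ⟨t, ht, hdensity⟩ := hx β hβ
  have hcount : Tendsto (fun n : ℕ =>
      (Nat.count (fun i => f^[i] x ∈ G ∩ ball x β) n : ℝ) / n) atTop (𝓝 t) := by
    simpa only [Nat.count_eq_card_filter_range, inv_mul_eq_div] using hdensity
  obtain ⟨N, hN⟩ := eventually_atTop.mp <|
    Nat.eventually_exists_between_mul_of_tendsto_count_div (a := 1 + σ) (b := 1 + 2 * σ) ht hcount
      (by linarith) (by linarith)
  refine ⟨N, fun n hn => ?_⟩
  obtain ⟨k, hlow, hhigh, hG, hball⟩ := hN n hn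
  exact ⟨k, hlow.le, hhigh.le, hG, by rwa [dist_comm]⟩
end

section
/- Let V be a Banach space, f : X → X a bijection of a set X, A : X → GL(V) a map with cocycle A^n_x (n ∈ ℤ), and let λ₋ ≤ λ₊ be reals and ε > 0. Fix a point x ∈ X and suppose that for every u ∈ V and every point y in the f-orbit of x, both series in N_y(u) := Σ_{n≥0} ‖A^n_y u‖·e^{−(λ₊+ε)n} + Σ_{n≥1} ‖A^{−n}_y u‖·e^{(λ₋−ε)n} converge. Then: (i) N_y(u) ≥ ‖u‖ for every u ∈ V and every y in the orbit of x; (ii) N_{fx}(A(x)u) ≤ e^{λ₊+ε}·N_x(u) for every u ∈ V; (iii) N_x(A(x)^{-1}w) ≤ e^{−λ₋+ε}·N_{fx}(w) for every w ∈ V. Consequently, N_{f^n x}(A^n_x u) ≤ e^{n(λ₊+ε)}·N_x(u) and N_x((A^n_x)^{-1}w) ≤ e^{n(−λ₋+ε)}·N_{f^n x}(w) for all n ≥ 1. -/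
open Filter Topology

/-- The cocycle generated by `A : X → GL(V)` over `f`. -/
noncomputable def cocycle {X : Type*} {V : Type*} [NormedAddCommGroup V] [NormedSpace ℝ V]
    (f : X → X) (A : X → (V →L[ℝ] V)ˣ) : ℕ → X → (V →L[ℝ] V)ˣ
  | 0, _ => 1
  | n + 1, x => cocycle f A n (f x) * A x

/-- The Lyapunov norm at `y` associated with the data `(λ₊, λ₋, ε)`:
`N_y(u) = Σ_{n≥0} ‖A^n_y u‖ e^{−(λ₊+ε)n} + Σ_{n≥1} ‖A^{−n}_y u‖ e^{(λ₋−ε)n}`,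
where `A^{−n}_y = (A^n_{f^{−n}y})⁻¹`. -/
noncomputable def lyapNorm {X : Type*} {V : Type*} [NormedAddCommGroup V] [NormedSpace ℝ V]
    (f : X ≃ X) (A : X → (V →L[ℝ] V)ˣ) (lp lm ε : ℝ) (y : X) (u : V) : ℝ :=
  (∑' n : ℕ, ‖(cocycle (⇑f) A n y).val u‖ * Real.exp (-(lp + ε) * (n : ℝ))) +
    ∑' n : ℕ, ‖((cocycle (⇑f) A (n + 1) ((⇑f.symm)^[n + 1] y))⁻¹ : (V →L[ℝ] V)ˣ).val u‖ *
      Real.exp ((lm - ε) * ((n : ℝ) + 1))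

/-!
Write `N_y = F_y + B_y` for the forward and the backward series. One step of the dynamics shifts
both series by one index:
`F_{fy}(A(y)u) = e^{λ₊+ε} (F_y(u) - ‖u‖)` and `B_{fy}(A(y)u) = e^{λ₋-ε} (‖u‖ + B_y(u))`.
As `λ₋ - ε ≤ λ₊ + ε`, these give the bound for `A(y)`; read at `u = A(y)⁻¹ w` they give the bound
for `A(y)⁻¹`, because the tail `F_y(u) - ‖u‖` is nonnegative. The bounds for `A^n_x` and
`(A^n_x)⁻¹` follow by induction along the orbit, and `‖u‖ ≤ N_y(u)` is the `n = 0` term of `F_y`.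
-/

section Cocycle

variable {X V : Type*} [NormedAddCommGroup V] [NormedSpace ℝ V]
  (f : X → X) (A : X → (V →L[ℝ] V)ˣ)

theorem cocycle_succ (n : ℕ) (x : X) : cocycle f A (n + 1) x = cocycle f A n (f x) * A x := rfl

theorem cocycle_succ' (n : ℕ) (x : X) :
    cocycle f A (n + 1) x = A (f^[n] x) * cocycle f A n x := by
  induction n generalizing x with
  | zero => simp [cocycle]
  | succ n ih => rw [cocycle_succ, ih, mul_assoc, ← cocycle_succ, Function.iterate_succ_apply]

theorem apply_cocycle_le_pow_mul {N : X → V → ℝ} {c : ℝ} (hc : 0 ≤ c) {x : X}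
    (hN : ∀ k u, N (f^[k + 1] x) ((A (f^[k] x)).val u) ≤ c * N (f^[k] x) u) (n : ℕ) (u : V) :
    N (f^[n] x) ((cocycle f A n x).val u) ≤ c ^ n * N x u := by
  induction n with
  | zero => simp [cocycle]
  | succ n ih =>
    calc N (f^[n + 1] x) ((cocycle f A (n + 1) x).val u)
        = N (f^[n + 1] x) ((A (f^[n] x)).val ((cocycle f A n x).val u)) := by
          rw [cocycle_succ']; rfl
      _ ≤ c * N (f^[n] x) ((cocycle f A n x).val u) := hN n _
      _ ≤ c * (c ^ n * N x u) := mul_le_mul_of_nonneg_left ih hc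
      _ = c ^ (n + 1) * N x u := by ring

theorem apply_cocycle_inv_le_pow_mul {N : X → V → ℝ} {c : ℝ} (hc : 0 ≤ c) {x : X}
    (hN : ∀ k w, N (f^[k] x) ((A (f^[k] x))⁻¹.val w) ≤ c * N (f^[k + 1] x) w) (n : ℕ) (w : V) :
    N x ((cocycle f A n x)⁻¹.val w) ≤ c ^ n * N (f^[n] x) w := by
  induction n generalizing w with
  | zero => simp [cocycle]
  | succ n ih =>
    calc N x ((cocycle f A (n + 1) x)⁻¹.val w)
        = N x ((cocycle f A n x)⁻¹.val ((A (f^[n] x))⁻¹.val w)) := by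
          rw [cocycle_succ', mul_inv_rev]; rfl
      _ ≤ c ^ n * N (f^[n] x) ((A (f^[n] x))⁻¹.val w) := ih _
      _ ≤ c ^ n * (c * N (f^[n + 1] x) w) :=
          mul_le_mul_of_nonneg_left (hN n w) (pow_nonneg hc n)
      _ = c ^ (n + 1) * N (f^[n + 1] x) w := by ring

end Cocycle

section LyapunovNorm

variable {X V : Type*} [NormedAddCommGroup V] [NormedSpace ℝ V]
  (f : X ≃ X) (A : X → (V →L[ℝ] V)ˣ)

theorem cocycle_succ_symm_iterate_succ (n : ℕ) (y : X) :
    cocycle f A (n + 1) ((⇑f.symm)^[n + 1] (f y)) = A y * cocycle f A n ((⇑f.symm)^[n] y) := by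
  rw [cocycle_succ', Function.iterate_succ_apply, f.symm_apply_apply,
    Function.RightInverse.iterate f.apply_symm_apply n y]

noncomputable def lyapFwdTerm (a : ℝ) (y : X) (u : V) (n : ℕ) : ℝ :=
  ‖(cocycle f A n y).val u‖ * Real.exp (-a * n)

noncomputable def lyapBwdTerm (b : ℝ) (y : X) (u : V) (n : ℕ) : ℝ :=
  ‖(cocycle f A (n + 1) ((⇑f.symm)^[n + 1] y))⁻¹.val u‖ * Real.exp (b * (n + 1))

theorem lyapNorm_eq_tsum_add_tsum (lp lm ε : ℝ) (y : X) (u : V) :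
    lyapNorm f A lp lm ε y u =
      ∑' n, lyapFwdTerm f A (lp + ε) y u n + ∑' n, lyapBwdTerm f A (lm - ε) y u n := rfl

variable {f A}

theorem lyapFwdTerm_nonneg (a : ℝ) (y : X) (u : V) (n : ℕ) : 0 ≤ lyapFwdTerm f A a y u n := by
  unfold lyapFwdTerm; positivity

theorem lyapBwdTerm_nonneg (b : ℝ) (y : X) (u : V) (n : ℕ) : 0 ≤ lyapBwdTerm f A b y u n := by
  unfold lyapBwdTerm; positivity

theorem lyapFwdTerm_zero (a : ℝ) (y : X) (u : V) : lyapFwdTerm f A a y u 0 = ‖u‖ := by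
  simp [lyapFwdTerm, cocycle]

theorem lyapFwdTerm_step (a : ℝ) (y : X) (u : V) (n : ℕ) :
    lyapFwdTerm f A a (f y) ((A y).val u) n = Real.exp a * lyapFwdTerm f A a y u (n + 1) := by
  simp only [lyapFwdTerm, cocycle_succ, Units.val_mul, mul_apply_eq_comp]
  rw [mul_left_comm, ← Real.exp_add]
  push_cast
  ring_nf

theorem lyapBwdTerm_step (b : ℝ) (y : X) (u : V) (n : ℕ) :
    lyapBwdTerm f A b (f y) ((A y).val u) n =
      ‖(cocycle f A n ((⇑f.symm)^[n] y))⁻¹.val u‖ * Real.exp (b * (n + 1)) := by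
  rw [lyapBwdTerm, cocycle_succ_symm_iterate_succ, mul_inv_rev, Units.val_mul, mul_apply_eq_comp,
    ← mul_apply_eq_comp (A y)⁻¹.val, ← Units.val_mul, inv_mul_cancel, Units.val_one,
    one_apply_eq_self]

theorem lyapBwdTerm_step_zero (b : ℝ) (y : X) (u : V) :
    lyapBwdTerm f A b (f y) ((A y).val u) 0 = Real.exp b * ‖u‖ := by
  simp [lyapBwdTerm_step, cocycle, mul_comm]

theorem lyapBwdTerm_step_succ (b : ℝ) (y : X) (u : V) (n : ℕ) :
    lyapBwdTerm f A b (f y) ((A y).val u) (n + 1) = Real.exp b * lyapBwdTerm f A b y u n := by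
  rw [lyapBwdTerm_step, lyapBwdTerm, mul_left_comm, ← Real.exp_add]
  push_cast
  ring_nf

theorem tsum_lyapFwdTerm_step {a : ℝ} {y : X} {u : V} (h : Summable (lyapFwdTerm f A a y u)) :
    ∑' n, lyapFwdTerm f A a (f y) ((A y).val u) n =
      Real.exp a * (∑' n, lyapFwdTerm f A a y u n - ‖u‖) := by
  rw [tsum_congr (lyapFwdTerm_step a y u), tsum_mul_left, h.tsum_eq_zero_add, lyapFwdTerm_zero,
    add_sub_cancel_left]

theorem tsum_lyapBwdTerm_step {b : ℝ} {y : X} {u : V} (h : Summable (lyapBwdTerm f A b y u)) :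
    ∑' n, lyapBwdTerm f A b (f y) ((A y).val u) n =
      Real.exp b * (‖u‖ + ∑' n, lyapBwdTerm f A b y u n) := by
  have h_shift : Summable fun n ↦ lyapBwdTerm f A b (f y) ((A y).val u) (n + 1) := by
    simpa only [lyapBwdTerm_step_succ] using h.mul_left (Real.exp b)
  rw [tsum_eq_zero_add' h_shift, lyapBwdTerm_step_zero, tsum_congr (lyapBwdTerm_step_succ b y u),
    tsum_mul_left, mul_add]

theorem norm_le_tsum_lyapFwdTerm {a : ℝ} {y : X} {u : V} (h : Summable (lyapFwdTerm f A a y u)) :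
    ‖u‖ ≤ ∑' n, lyapFwdTerm f A a y u n :=
  lyapFwdTerm_zero (f := f) (A := A) a y u ▸ h.le_tsum 0 fun n _ ↦ lyapFwdTerm_nonneg a y u n

theorem norm_le_lyapNorm {lp lm ε : ℝ} {y : X} {u : V}
    (h : Summable (lyapFwdTerm f A (lp + ε) y u)) : ‖u‖ ≤ lyapNorm f A lp lm ε y u :=
  le_add_of_le_of_nonneg (norm_le_tsum_lyapFwdTerm h) (tsum_nonneg (lyapBwdTerm_nonneg _ _ _))

theorem lyapNorm_apply_le {lp lm ε : ℝ} (hrate : lm - ε ≤ lp + ε) {y : X} {u : V}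
    (hF : Summable (lyapFwdTerm f A (lp + ε) y u)) (hB : Summable (lyapBwdTerm f A (lm - ε) y u)) :
    lyapNorm f A lp lm ε (f y) ((A y).val u) ≤ Real.exp (lp + ε) * lyapNorm f A lp lm ε y u := by
  have hexp : Real.exp (lm - ε) ≤ Real.exp (lp + ε) := Real.exp_le_exp.mpr hrate
  have hB_nonneg : 0 ≤ ‖u‖ + ∑' n, lyapBwdTerm f A (lm - ε) y u n :=
    add_nonneg (norm_nonneg u) (tsum_nonneg (lyapBwdTerm_nonneg _ _ _))
  rw [lyapNorm_eq_tsum_add_tsum, lyapNorm_eq_tsum_add_tsum, tsum_lyapFwdTerm_step hF,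
    tsum_lyapBwdTerm_step hB]
  linarith [mul_le_mul_of_nonneg_right hexp hB_nonneg]

theorem lyapNorm_inv_apply_le {lp lm ε : ℝ} (hrate : lm - ε ≤ lp + ε) {y : X} {w : V}
    (hF : Summable (lyapFwdTerm f A (lp + ε) y ((A y)⁻¹.val w)))
    (hB : Summable (lyapBwdTerm f A (lm - ε) y ((A y)⁻¹.val w))) :
    lyapNorm f A lp lm ε y ((A y)⁻¹.val w) ≤ Real.exp (-lm + ε) * lyapNorm f A lp lm ε (f y) w := by
  set v := (A y)⁻¹.val w
  have hw : (A y).val v = w := by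
    rw [← mul_apply_eq_comp, ← Units.val_mul, mul_inv_cancel, Units.val_one, one_apply_eq_self]
  set F := ∑' n, lyapFwdTerm f A (lp + ε) y v n
  set B := ∑' n, lyapBwdTerm f A (lm - ε) y v n
  have hexp : 1 ≤ Real.exp (lp + ε - (lm - ε)) := Real.one_le_exp (sub_nonneg.mpr hrate)
  have htail : 0 ≤ F - ‖v‖ := sub_nonneg.mpr (norm_le_tsum_lyapFwdTerm hF)
  rw [← hw, lyapNorm_eq_tsum_add_tsum, lyapNorm_eq_tsum_add_tsum, tsum_lyapFwdTerm_step hF,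
    tsum_lyapBwdTerm_step hB]
  calc F + B = (F - ‖v‖) + (‖v‖ + B) := by ring
    _ ≤ Real.exp (lp + ε - (lm - ε)) * (F - ‖v‖) + (‖v‖ + B) :=
      add_le_add_left (le_mul_of_one_le_left htail hexp) _
    _ = Real.exp (-lm + ε) * (Real.exp (lp + ε) * (F - ‖v‖) + Real.exp (lm - ε) * (‖v‖ + B)) := by
      have h_plus : Real.exp (-lm + ε) * Real.exp (lp + ε) = Real.exp (lp + ε - (lm - ε)) := by
        rw [← Real.exp_add]; ring_nf
      have h_minus : Real.exp (-lm + ε) * Real.exp (lm - ε) = 1 := by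
        rw [← Real.exp_add, ← Real.exp_zero]; ring_nf
      rw [mul_add, ← mul_assoc, ← mul_assoc, h_plus, h_minus, one_mul]

end LyapunovNorm

theorem lyapunov_norm_properties_general {X V : Type*} [NormedAddCommGroup V] [NormedSpace ℝ V]
    (f : X ≃ X) (A : X → (V →L[ℝ] V)ˣ)
    (lp lm ε : ℝ) (hll : lm ≤ lp) (hε : 0 < ε) (x : X)
    (hsum : ∀ y : X, (∃ n : ℕ, y = (⇑f)^[n] x ∨ y = (⇑f.symm)^[n] x) → ∀ u : V,
      Summable (fun n : ℕ => ‖(cocycle (⇑f) A n y).val u‖ * Real.exp (-(lp + ε) * (n : ℝ))) ∧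
      Summable (fun n : ℕ =>
        ‖((cocycle (⇑f) A (n + 1) ((⇑f.symm)^[n + 1] y))⁻¹ : (V →L[ℝ] V)ˣ).val u‖ *
          Real.exp ((lm - ε) * ((n : ℝ) + 1)))) :
    (∀ y : X, (∃ n : ℕ, y = (⇑f)^[n] x ∨ y = (⇑f.symm)^[n] x) → ∀ u : V,
      ‖u‖ ≤ lyapNorm f A lp lm ε y u) ∧
    (∀ u : V, lyapNorm f A lp lm ε (f x) ((A x).val u) ≤
      Real.exp (lp + ε) * lyapNorm f A lp lm ε x u) ∧
    (∀ w : V, lyapNorm f A lp lm ε x (((A x)⁻¹ : (V →L[ℝ] V)ˣ).val w) ≤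
      Real.exp (-lm + ε) * lyapNorm f A lp lm ε (f x) w) ∧
    (∀ n : ℕ, 1 ≤ n → ∀ u : V,
      lyapNorm f A lp lm ε ((⇑f)^[n] x) ((cocycle (⇑f) A n x).val u) ≤
        Real.exp ((n : ℝ) * (lp + ε)) * lyapNorm f A lp lm ε x u) ∧
    (∀ n : ℕ, 1 ≤ n → ∀ w : V,
      lyapNorm f A lp lm ε x (((cocycle (⇑f) A n x)⁻¹ : (V →L[ℝ] V)ˣ).val w) ≤
        Real.exp ((n : ℝ) * (-lm + ε)) * lyapNorm f A lp lm ε ((⇑f)^[n] x) w) := by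
  have horbit : ∀ k : ℕ, ∃ n : ℕ, (⇑f)^[k] x = (⇑f)^[n] x ∨ (⇑f)^[k] x = (⇑f.symm)^[n] x :=
    fun k ↦ ⟨k, .inl rfl⟩
  have hrate : lm - ε ≤ lp + ε := by linarith
  have hstep : ∀ k u, lyapNorm f A lp lm ε ((⇑f)^[k + 1] x) ((A ((⇑f)^[k] x)).val u) ≤
      Real.exp (lp + ε) * lyapNorm f A lp lm ε ((⇑f)^[k] x) u := fun k u ↦ by
    rw [Function.iterate_succ_apply']
    exact lyapNorm_apply_le hrate (hsum _ (horbit k) u).1 (hsum _ (horbit k) u).2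
  have hstep_inv : ∀ k w, lyapNorm f A lp lm ε ((⇑f)^[k] x) ((A ((⇑f)^[k] x))⁻¹.val w) ≤
      Real.exp (-lm + ε) * lyapNorm f A lp lm ε ((⇑f)^[k + 1] x) w := fun k w ↦ by
    rw [Function.iterate_succ_apply']
    exact lyapNorm_inv_apply_le hrate (hsum _ (horbit k) _).1 (hsum _ (horbit k) _).2
  refine ⟨fun y hy u ↦ norm_le_lyapNorm (hsum y hy u).1, hstep 0, hstep_inv 0,
    fun n _ u ↦ ?_, fun n _ w ↦ ?_⟩
  · rw [Real.exp_nat_mul]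
    exact apply_cocycle_le_pow_mul _ A (Real.exp_pos _).le hstep n u
  · rw [Real.exp_nat_mul]
    exact apply_cocycle_inv_le_pow_mul _ A (Real.exp_pos _).le hstep_inv n w

/-- basic properties of the Lyapunov norm `N_y` for a `GL(V)`-valued cocycle
over a bijection `f`, assuming both defining series converge at every point of the orbit
of `x`: it dominates the background norm, and it transforms under `A(x)`, `A(x)⁻¹` and the
iterates `A^n_x`, `(A^n_x)⁻¹` with factors `e^{λ₊+ε}`, `e^{−λ₋+ε}`, `e^{n(λ₊+ε)}`,
`e^{n(−λ₋+ε)}` respectively. -/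
theorem lyapunov_norm_properties {X V : Type*} [NormedAddCommGroup V] [NormedSpace ℝ V]
    [CompleteSpace V] (f : X ≃ X) (A : X → (V →L[ℝ] V)ˣ)
    (lp lm ε : ℝ) (hll : lm ≤ lp) (hε : 0 < ε) (x : X)
    (hsum : ∀ y : X, (∃ n : ℕ, y = (⇑f)^[n] x ∨ y = (⇑f.symm)^[n] x) → ∀ u : V,
      Summable (fun n : ℕ => ‖(cocycle (⇑f) A n y).val u‖ * Real.exp (-(lp + ε) * (n : ℝ))) ∧
      Summable (fun n : ℕ =>
        ‖((cocycle (⇑f) A (n + 1) ((⇑f.symm)^[n + 1] y))⁻¹ : (V →L[ℝ] V)ˣ).val u‖ *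
          Real.exp ((lm - ε) * ((n : ℝ) + 1)))) :
    (∀ y : X, (∃ n : ℕ, y = (⇑f)^[n] x ∨ y = (⇑f.symm)^[n] x) → ∀ u : V,
      ‖u‖ ≤ lyapNorm f A lp lm ε y u) ∧
    (∀ u : V, lyapNorm f A lp lm ε (f x) ((A x).val u) ≤
      Real.exp (lp + ε) * lyapNorm f A lp lm ε x u) ∧
    (∀ w : V, lyapNorm f A lp lm ε x (((A x)⁻¹ : (V →L[ℝ] V)ˣ).val w) ≤
      Real.exp (-lm + ε) * lyapNorm f A lp lm ε (f x) w) ∧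
    (∀ n : ℕ, 1 ≤ n → ∀ u : V,
      lyapNorm f A lp lm ε ((⇑f)^[n] x) ((cocycle (⇑f) A n x).val u) ≤
        Real.exp ((n : ℝ) * (lp + ε)) * lyapNorm f A lp lm ε x u) ∧
    (∀ n : ℕ, 1 ≤ n → ∀ w : V,
      lyapNorm f A lp lm ε x (((cocycle (⇑f) A n x)⁻¹ : (V →L[ℝ] V)ˣ).val w) ≤
        Real.exp ((n : ℝ) * (-lm + ε)) * lyapNorm f A lp lm ε ((⇑f)^[n] x) w) :=
  lyapunov_norm_properties_general f A lp lm ε hll hε x hsum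
end

section
/- Let H and H' be real inner product spaces with orthogonal direct sum decompositions H = E₁ ⊕ E₂ and H' = F₁ ⊕ F₂ (E₂ = E₁^⊥, F₂ = F₁^⊥). Let B : H → H' be a bounded linear map with B(E₁) ⊆ F₁ and B(E₂) ⊆ F₂, and suppose for reals λ ≥ λ' and ε > 0: ‖Bu₁‖ ≥ e^{λ−ε}‖u₁‖ for all u₁ ∈ E₁, ‖Bu₂‖ ≤ e^{λ'+ε}‖u₂‖ for all u₂ ∈ E₂, and ‖Bu‖ ≤ e^{λ+ε}‖u‖ for all u ∈ H. Let Δ : H' → H' be a bounded linear map with ‖Δ‖ ≤ η and set T = (Id + Δ) ∘ B. Then for every u ∈ H with ‖u₂‖ ≤ ‖u₁‖ (where u = u₁ + u₂, u₁ ∈ E₁, u₂ ∈ E₂), writing Tu = w₁ + w₂ with w₁ ∈ F₁, w₂ ∈ F₂, one has ‖w₁‖ ≥ (e^{λ−ε} − √2·η·e^{λ+ε})·‖u₁‖ and ‖w₂‖ ≤ (e^{λ'+ε} + √2·η·e^{λ+ε})·‖u₁‖. -/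
/-! On the cone, `‖u‖ ≤ √2 ‖u₁‖`, so the perturbation `d = Δ (B u)` has norm at most
`√2 η e^{λ+ε} ‖u₁‖`. Since `B` respects the splittings, `w₁ - B u₁` and `w₂ - B u₂` are the
orthogonal components of `d`, hence each is bounded by `‖d‖`; the triangle inequality and the
bounds on `B u₁`, `B u₂` finish the proof. -/

namespace Submodule

variable {H : Type*} [NormedAddCommGroup H] [InnerProductSpace ℝ H] (K : Submodule ℝ H)
  {a b : H}

theorem norm_add_mul_self_of_mem_orthogonal (ha : a ∈ K) (hb : b ∈ Kᗮ) :
    ‖a + b‖ * ‖a + b‖ = ‖a‖ * ‖a‖ + ‖b‖ * ‖b‖ :=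
  norm_add_sq_eq_norm_sq_add_norm_sq_real (K.inner_right_of_mem_orthogonal ha hb)

theorem norm_le_norm_add_of_mem_orthogonal (ha : a ∈ K) (hb : b ∈ Kᗮ) : ‖a‖ ≤ ‖a + b‖ := by
  refine (mul_self_le_mul_self_iff (norm_nonneg _) (norm_nonneg _)).2 ?_
  rw [K.norm_add_mul_self_of_mem_orthogonal ha hb]
  nlinarith [mul_self_nonneg ‖b‖]

theorem norm_le_norm_add_of_mem_orthogonal' (ha : a ∈ K) (hb : b ∈ Kᗮ) : ‖b‖ ≤ ‖a + b‖ := by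
  rw [add_comm]
  exact Kᗮ.norm_le_norm_add_of_mem_orthogonal hb (K.le_orthogonal_orthogonal ha)

theorem norm_add_le_sqrt_two_mul_of_mem_orthogonal (ha : a ∈ K) (hb : b ∈ Kᗮ)
    (hab : ‖b‖ ≤ ‖a‖) : ‖a + b‖ ≤ Real.sqrt 2 * ‖a‖ := by
  have h2 : Real.sqrt 2 * Real.sqrt 2 = 2 := Real.mul_self_sqrt zero_le_two
  refine (mul_self_le_mul_self_iff (norm_nonneg _) (by positivity)).2 ?_
  rw [K.norm_add_mul_self_of_mem_orthogonal ha hb, mul_mul_mul_comm, h2]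
  nlinarith [mul_self_le_mul_self (norm_nonneg b) hab]

end Submodule

theorem cone_estimates_perturbation_general {H H' : Type*}
    [NormedAddCommGroup H] [InnerProductSpace ℝ H]
    [NormedAddCommGroup H'] [InnerProductSpace ℝ H']
    (E₁ : Submodule ℝ H) (F₁ : Submodule ℝ H')
    (B : H →L[ℝ] H') (hBE₁ : ∀ u ∈ E₁, B u ∈ F₁) (hBE₂ : ∀ u ∈ E₁ᗮ, B u ∈ F₁ᗮ)
    (lam lam' ε : ℝ)
    (hB1 : ∀ u ∈ E₁, Real.exp (lam - ε) * ‖u‖ ≤ ‖B u‖)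
    (hB2 : ∀ u ∈ E₁ᗮ, ‖B u‖ ≤ Real.exp (lam' + ε) * ‖u‖)
    (hB : ∀ u : H, ‖B u‖ ≤ Real.exp (lam + ε) * ‖u‖)
    (Δ : H' →L[ℝ] H') (η : ℝ) (hΔ : ‖Δ‖ ≤ η) :
    ∀ u₁ ∈ E₁, ∀ u₂ ∈ E₁ᗮ, ‖u₂‖ ≤ ‖u₁‖ →
      ∀ w₁ ∈ F₁, ∀ w₂ ∈ F₁ᗮ,
        ((ContinuousLinearMap.id ℝ H' + Δ).comp B) (u₁ + u₂) = w₁ + w₂ →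
        (Real.exp (lam - ε) - Real.sqrt 2 * η * Real.exp (lam + ε)) * ‖u₁‖ ≤ ‖w₁‖ ∧
        ‖w₂‖ ≤ (Real.exp (lam' + ε) + Real.sqrt 2 * η * Real.exp (lam + ε)) * ‖u₁‖ := by
  intro u₁ hu₁ u₂ hu₂ hcone w₁ hw₁ w₂ hw₂ hT
  have hη : 0 ≤ η := (norm_nonneg Δ).trans hΔ
  have hdiff : (w₁ - B u₁) + (w₂ - B u₂) = Δ (B (u₁ + u₂)) := by
    rw [sub_add_sub_comm, ← hT, ← map_add B]
    simp only [ContinuousLinearMap.comp_apply, add_apply,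
      ContinuousLinearMap.id_apply, add_sub_cancel_left]
  have hperturb : ‖Δ (B (u₁ + u₂))‖ ≤ Real.sqrt 2 * η * Real.exp (lam + ε) * ‖u₁‖ :=
    calc ‖Δ (B (u₁ + u₂))‖ ≤ η * (Real.exp (lam + ε) * ‖u₁ + u₂‖) :=
          (Δ.le_of_opNorm_le hΔ _).trans (mul_le_mul_of_nonneg_left (hB _) hη)
      _ ≤ η * (Real.exp (lam + ε) * (Real.sqrt 2 * ‖u₁‖)) := by
          gcongr
          exact E₁.norm_add_le_sqrt_two_mul_of_mem_orthogonal hu₁ hu₂ hcone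
      _ = Real.sqrt 2 * η * Real.exp (lam + ε) * ‖u₁‖ := by ring
  have hv₁ : w₁ - B u₁ ∈ F₁ := F₁.sub_mem hw₁ (hBE₁ u₁ hu₁)
  have hv₂ : w₂ - B u₂ ∈ F₁ᗮ := F₁ᗮ.sub_mem hw₂ (hBE₂ u₂ hu₂)
  have hd₁ := (F₁.norm_le_norm_add_of_mem_orthogonal hv₁ hv₂).trans (hdiff ▸ hperturb)
  have hd₂ := (F₁.norm_le_norm_add_of_mem_orthogonal' hv₁ hv₂).trans (hdiff ▸ hperturb)
  constructor
  · linarith [hB1 u₁ hu₁, norm_le_norm_add_norm_sub w₁ (B u₁)]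
  · linarith [hB2 u₂ hu₂, norm_le_norm_add_norm_sub' w₂ (B u₂),
      mul_le_mul_of_nonneg_left hcone (Real.exp_nonneg (lam' + ε))]

/-- cone estimates for a perturbation `T = (Id + Δ) ∘ B` of a bounded map `B`
respecting orthogonal splittings `H = E₁ ⊕ E₁ᗮ`, `H' = F₁ ⊕ F₁ᗮ`. -/
theorem cone_estimates_perturbation {H H' : Type*}
    [NormedAddCommGroup H] [InnerProductSpace ℝ H]
    [NormedAddCommGroup H'] [InnerProductSpace ℝ H']
    (E₁ : Submodule ℝ H) (F₁ : Submodule ℝ H')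
    (B : H →L[ℝ] H') (hBE₁ : ∀ u ∈ E₁, B u ∈ F₁) (hBE₂ : ∀ u ∈ E₁ᗮ, B u ∈ F₁ᗮ)
    (lam lam' ε : ℝ) (hll : lam' ≤ lam) (hε : 0 < ε)
    (hB1 : ∀ u ∈ E₁, Real.exp (lam - ε) * ‖u‖ ≤ ‖B u‖)
    (hB2 : ∀ u ∈ E₁ᗮ, ‖B u‖ ≤ Real.exp (lam' + ε) * ‖u‖)
    (hB : ∀ u : H, ‖B u‖ ≤ Real.exp (lam + ε) * ‖u‖)
    (Δ : H' →L[ℝ] H') (η : ℝ) (hΔ : ‖Δ‖ ≤ η) :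
    ∀ u₁ ∈ E₁, ∀ u₂ ∈ E₁ᗮ, ‖u₂‖ ≤ ‖u₁‖ →
      ∀ w₁ ∈ F₁, ∀ w₂ ∈ F₁ᗮ,
        ((ContinuousLinearMap.id ℝ H' + Δ).comp B) (u₁ + u₂) = w₁ + w₂ →
        (Real.exp (lam - ε) - Real.sqrt 2 * η * Real.exp (lam + ε)) * ‖u₁‖ ≤ ‖w₁‖ ∧
        ‖w₂‖ ≤ (Real.exp (lam' + ε) + Real.sqrt 2 * η * Real.exp (lam + ε)) * ‖u₁‖ :=
  cone_estimates_perturbation_general E₁ F₁ B hBE₁ hBE₂ lam lam' ε hB1 hB2 hB Δ η hΔ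
end

section
/- Let H be a real inner product space with an orthogonal decomposition H = E₁ ⊕ E₂ and associated cone K = {u : ‖u₂‖ ≤ ‖u₁‖}, where u = u₁ + u₂ with u₁ ∈ E₁, u₂ ∈ E₂. Let T : H → H be a bounded linear map with T(K) ⊆ K and suppose there is ρ > 0 with ‖(Tu)₁‖ ≥ ρ·‖u₁‖ for every u ∈ K. Then for every u ∈ K and every n ∈ ℕ one has ‖Tⁿu‖ ≥ ρⁿ·‖u‖/√2; in particular, if K contains a nonzero vector, then liminf_{n→∞} (1/n)·log‖Tⁿ‖ ≥ log ρ. -/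
/-! Pythagoras gives `‖u₁‖ ≤ ‖u‖ ≤ √2 ‖u₁‖` on the cone. Since `T` keeps the cone invariant,
induction shows that the first component of `Tⁿu` has norm at least `ρⁿ ‖u₁‖`, whence
`‖Tⁿu‖ ≥ ρⁿ ‖u‖ / √2`. A nonzero `u` in the cone then gives `‖Tⁿ‖ ≥ ρⁿ / √2`, and taking
`(1/n) log` yields the liminf bound; the bound `‖Tⁿ‖ ≤ ‖T‖ⁿ` is what keeps that liminf from
being a junk value of an unbounded sequence. -/

open Filter

section OrthogonalCone

variable {H : Type*} [NormedAddCommGroup H] [InnerProductSpace ℝ H] {E : Submodule ℝ H}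

def orthogonalCone (E : Submodule ℝ H) : Set H :=
  {u | ∃ u₁ ∈ E, ∃ u₂ ∈ Eᗮ, u = u₁ + u₂ ∧ ‖u₂‖ ≤ ‖u₁‖}

theorem norm_add_sq_of_mem_orthogonal {u₁ u₂ : H} (hu₁ : u₁ ∈ E) (hu₂ : u₂ ∈ Eᗮ) :
    ‖u₁ + u₂‖ ^ 2 = ‖u₁‖ ^ 2 + ‖u₂‖ ^ 2 := by
  simpa only [sq] using norm_add_sq_eq_norm_sq_add_norm_sq_real
    (Submodule.inner_right_of_mem_orthogonal hu₁ hu₂)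

theorem norm_le_norm_add_of_mem_orthogonal {u₁ u₂ : H} (hu₁ : u₁ ∈ E) (hu₂ : u₂ ∈ Eᗮ) :
    ‖u₁‖ ≤ ‖u₁ + u₂‖ :=
  le_of_sq_le_sq (by
    rw [norm_add_sq_of_mem_orthogonal hu₁ hu₂]
    exact le_add_of_nonneg_right (sq_nonneg _)) (norm_nonneg _)

theorem norm_add_le_sqrt_two_mul_of_mem_orthogonal {u₁ u₂ : H} (hu₁ : u₁ ∈ E) (hu₂ : u₂ ∈ Eᗮ)
    (hu : ‖u₂‖ ≤ ‖u₁‖) : ‖u₁ + u₂‖ ≤ √2 * ‖u₁‖ := by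
  refine le_of_sq_le_sq ?_ (by positivity)
  rw [norm_add_sq_of_mem_orthogonal hu₁ hu₂, mul_pow, Real.sq_sqrt zero_le_two]
  nlinarith [norm_nonneg u₂]

theorem exists_orthogonalCone_decomposition_iterate {f : H → H}
    (hf : Set.MapsTo f (orthogonalCone E) (orthogonalCone E)) {ρ : ℝ} (hρ : 0 ≤ ρ)
    (hgrow : ∀ u₁ ∈ E, ∀ u₂ ∈ Eᗮ, ‖u₂‖ ≤ ‖u₁‖ →
      ∀ w₁ ∈ E, ∀ w₂ ∈ Eᗮ, f (u₁ + u₂) = w₁ + w₂ → ρ * ‖u₁‖ ≤ ‖w₁‖)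
    {u₁ u₂ : H} (hu₁ : u₁ ∈ E) (hu₂ : u₂ ∈ Eᗮ) (hu : ‖u₂‖ ≤ ‖u₁‖) (n : ℕ) :
    ∃ v₁ ∈ E, ∃ v₂ ∈ Eᗮ, f^[n] (u₁ + u₂) = v₁ + v₂ ∧ ‖v₂‖ ≤ ‖v₁‖ ∧ ρ ^ n * ‖u₁‖ ≤ ‖v₁‖ := by
  induction n with
  | zero => exact ⟨u₁, hu₁, u₂, hu₂, rfl, hu, by simp⟩
  | succ n ih =>
    obtain ⟨v₁, hv₁, v₂, hv₂, hv, hvle, hvgrow⟩ := ih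
    obtain ⟨w₁, hw₁, w₂, hw₂, hw, hwle⟩ := hf ⟨v₁, hv₁, v₂, hv₂, hv, hvle⟩
    refine ⟨w₁, hw₁, w₂, hw₂, by rw [Function.iterate_succ_apply', hw], hwle, ?_⟩
    calc ρ ^ (n + 1) * ‖u₁‖ = ρ * (ρ ^ n * ‖u₁‖) := by ring
      _ ≤ ρ * ‖v₁‖ := by gcongr
      _ ≤ ‖w₁‖ := hgrow v₁ hv₁ v₂ hv₂ hvle w₁ hw₁ w₂ hw₂ (hv ▸ hw)

theorem pow_mul_norm_div_sqrt_two_le_norm_iterate {f : H → H}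
    (hf : Set.MapsTo f (orthogonalCone E) (orthogonalCone E)) {ρ : ℝ} (hρ : 0 ≤ ρ)
    (hgrow : ∀ u₁ ∈ E, ∀ u₂ ∈ Eᗮ, ‖u₂‖ ≤ ‖u₁‖ →
      ∀ w₁ ∈ E, ∀ w₂ ∈ Eᗮ, f (u₁ + u₂) = w₁ + w₂ → ρ * ‖u₁‖ ≤ ‖w₁‖)
    {u : H} (hu : u ∈ orthogonalCone E) (n : ℕ) : ρ ^ n * ‖u‖ / √2 ≤ ‖f^[n] u‖ := by
  obtain ⟨u₁, hu₁, u₂, hu₂, rfl, hle⟩ := hu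
  obtain ⟨v₁, hv₁, v₂, hv₂, hv, -, hvgrow⟩ :=
    exists_orthogonalCone_decomposition_iterate hf hρ hgrow hu₁ hu₂ hle n
  rw [hv, div_le_iff₀ (by positivity)]
  calc ρ ^ n * ‖u₁ + u₂‖ ≤ ρ ^ n * (√2 * ‖u₁‖) := by
        gcongr; exact norm_add_le_sqrt_two_mul_of_mem_orthogonal hu₁ hu₂ hle
    _ = ρ ^ n * ‖u₁‖ * √2 := by ring
    _ ≤ ‖v₁ + v₂‖ * √2 := by
        gcongr; exact hvgrow.trans (norm_le_norm_add_of_mem_orthogonal hv₁ hv₂)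

end OrthogonalCone

theorem log_le_liminf_inv_mul_log {a : ℕ → ℝ} {c ρ C : ℝ} (hc : 0 < c) (hρ : 0 < ρ)
    (hlower : ∀ n, c * ρ ^ n ≤ a n) (hupper : ∀ᶠ n in atTop, a n ≤ C ^ n) :
    Real.log ρ ≤ liminf (fun n : ℕ => (n : ℝ)⁻¹ * Real.log (a n)) atTop := by
  have hlog_lower (n : ℕ) :
      (n : ℝ)⁻¹ * Real.log (c * ρ ^ n) ≤ (n : ℝ)⁻¹ * Real.log (a n) := by
    gcongr
    exact hlower n
  have hlog_upper : ∀ᶠ n : ℕ in atTop, (n : ℝ)⁻¹ * Real.log (a n) ≤ Real.log C := by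
    filter_upwards [hupper, eventually_ne_atTop 0] with n hn hn0
    rw [inv_mul_le_iff₀ (by positivity), ← Real.log_pow]
    exact Real.log_le_log ((by positivity : 0 < c * ρ ^ n).trans_le (hlower n)) hn
  have htendsto : Tendsto (fun n : ℕ => (n : ℝ)⁻¹ * Real.log (c * ρ ^ n)) atTop
      (nhds (Real.log ρ)) := by
    have h := (tendsto_inv_atTop_nhds_zero_nat.mul_const (Real.log c)).const_add (Real.log ρ)
    rw [zero_mul, add_zero] at h
    refine h.congr' ?_
    filter_upwards [eventually_ne_atTop 0] with n hn
    rw [Real.log_mul hc.ne' (by positivity), Real.log_pow]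
    field_simp
    ring
  rw [← htendsto.liminf_eq]
  exact liminf_le_liminf (.of_forall hlog_lower) htendsto.isBoundedUnder_ge
    (isCoboundedUnder_ge_of_eventually_le atTop hlog_upper)

/-- if `T` preserves the cone `K = {‖u₂‖ ≤ ‖u₁‖}` of an orthogonal
decomposition `H = E₁ ⊕ E₁ᗮ` and expands first components by a factor `ρ > 0`, then
`‖Tⁿu‖ ≥ ρⁿ‖u‖/√2` on `K`, and if `K` contains a nonzero vector then
`liminf (1/n)·log‖Tⁿ‖ ≥ log ρ`. -/
theorem cone_iterate_lower_estimate {H : Type*} [NormedAddCommGroup H]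
    [InnerProductSpace ℝ H] (E₁ : Submodule ℝ H) (T : H →L[ℝ] H)
    (K : Set H) (hK : K = {u : H | ∃ u₁ ∈ E₁, ∃ u₂ ∈ E₁ᗮ, u = u₁ + u₂ ∧ ‖u₂‖ ≤ ‖u₁‖})
    (hTK : Set.MapsTo T K K) (ρ : ℝ) (hρ : 0 < ρ)
    (hgrow : ∀ u₁ ∈ E₁, ∀ u₂ ∈ E₁ᗮ, ‖u₂‖ ≤ ‖u₁‖ →
      ∀ w₁ ∈ E₁, ∀ w₂ ∈ E₁ᗮ, T (u₁ + u₂) = w₁ + w₂ → ρ * ‖u₁‖ ≤ ‖w₁‖) :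
    (∀ u ∈ K, ∀ n : ℕ, ρ ^ n * ‖u‖ / Real.sqrt 2 ≤ ‖(T ^ n) u‖) ∧
    ((∃ u ∈ K, u ≠ 0) →
      Real.log ρ ≤ liminf (fun n : ℕ => (n : ℝ)⁻¹ * Real.log ‖T ^ n‖) atTop) := by
  change K = orthogonalCone E₁ at hK
  subst hK
  have hcone (u : H) (hu : u ∈ orthogonalCone E₁) (n : ℕ) :
      ρ ^ n * ‖u‖ / √2 ≤ ‖(T ^ n) u‖ := by
    rw [FunLike.coe_pow_eq_iterate]
    exact pow_mul_norm_div_sqrt_two_le_norm_iterate hTK hρ.le hgrow hu n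
  refine ⟨hcone, fun ⟨u, hu, hu0⟩ => ?_⟩
  refine log_le_liminf_inv_mul_log (c := (√2)⁻¹) (C := ‖T‖) (by positivity) hρ (fun n => ?_)
    (eventually_gt_atTop 0 |>.mono fun n hn => norm_pow_le' T hn)
  refine le_of_mul_le_mul_right ?_ (norm_pos_iff.mpr hu0)
  calc (√2)⁻¹ * ρ ^ n * ‖u‖ = ρ ^ n * ‖u‖ / √2 := by ring
    _ ≤ ‖(T ^ n) u‖ := hcone u hu n
    _ ≤ ‖T ^ n‖ * ‖u‖ := (T ^ n).le_opNorm u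
end

section
/- Let (X,dist) be a metric space, f : X → X a bijection, V a Banach space, and A : X → GL(V) an α-Hölder map with constant M such that sup_{x∈X} ‖A(x)^{-1}‖ ≤ e^{−λ*} for some λ* ∈ ℝ. Fix reals λ₋ ≤ λ₊, ε > 0 and γ > 0 with ε < αγ. Then there exists a constant c > 0, depending only on M, λ*, and αγ − ε, with the following property. Let ℓ ≥ 1, δ > 0, k ∈ ℕ, and let x, p ∈ X satisfy dist(f^i x, f^i p) ≤ δ·e^{−γ·min(i, k−i)} for every i = 0,…,k. Suppose there are norms N_0,…,N_k on V such that for all u ∈ V and 0 ≤ i ≤ k: ‖u‖ ≤ N_i(u) ≤ ℓ·e^{ε·min(i,k−i)}·‖u‖, and for 0 ≤ i ≤ k−1: N_{i+1}(A(f^i x)u) ≤ e^{λ₊+ε}·N_i(u) and N_i(A(f^i x)^{-1}u) ≤ e^{−λ₋+ε}·N_{i+1}(u). Then for every i = 0,…,k: ‖A^i_p‖ ≤ ℓ·e^{c·ℓ·δ^α}·e^{i(λ₊+ε)} and ‖(A^i_p)^{-1}‖ ≤ ℓ·e^{ε·min(i,k−i)}·e^{c·ℓ·δ^α}·e^{i(−λ₋+ε)}.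 -/
/-!
Write `A (f^[j] p) = A (f^[j] x) + D j`; Hölder continuity and the shadowing assumption give
`‖D j‖ ≤ M δ^α e^{-αγ min(j, k-j)}`. Along the orbit of `x` one step of the cocycle multiplies the
Lyapunov norm by at most `e^{λ₊+ε}`; inserting the perturbation `D j` costs an extra factor
`1 + ℓ e^{ε min(j+1, k-j-1)} ‖D j‖ e^{-(λ₊+ε)} ≤ exp (C ℓ δ^α e^{-(αγ-ε) min(j, k-j)})`, and these
exponents form two geometric series, bounded independently of `k` because `ε < αγ`.

The `N j` are not assumed subadditive, so a perturbation is never added inside `N j`: one bounds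
`‖A^m_{f^i x} (A^i_p u)‖` in the ambient norm for all `m` at once, by induction on `i`.
The inverse cocycle is the same estimate for the reversed chain of inverses.
-/

open Finset Real

section LeftProd

variable {G : Type*} [Monoid G]

def leftProd (g : ℕ → G) : ℕ → G
  | 0 => 1
  | n + 1 => g n * leftProd g n

@[simp]
theorem leftProd_zero (g : ℕ → G) : leftProd g 0 = 1 := rfl

theorem leftProd_succ (g : ℕ → G) (n : ℕ) : leftProd g (n + 1) = g n * leftProd g n := rfl

theorem leftProd_succ' (g : ℕ → G) (n : ℕ) :
    leftProd g (n + 1) = leftProd (fun j => g (j + 1)) n * g 0 := by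
  induction n with
  | zero => simp [leftProd_succ]
  | succ n ih => rw [leftProd_succ, ih, leftProd_succ, mul_assoc]

theorem map_leftProd {H F : Type*} [Monoid H] [FunLike F G H] [MonoidHomClass F G H] (φ : F)
    (g : ℕ → G) (n : ℕ) : φ (leftProd g n) = leftProd (fun j => φ (g j)) n := by
  induction n with
  | zero => simp
  | succ n ih => simp [leftProd_succ, ih]

end LeftProd

theorem leftProd_inv {G : Type*} [Group G] (g : ℕ → G) (n : ℕ) :
    (leftProd g n)⁻¹ = leftProd (fun j => (g (n - 1 - j))⁻¹) n := by
  induction n with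
  | zero => simp
  | succ n ih =>
    rw [leftProd_succ, mul_inv_rev, ih, leftProd_succ']
    simp only [Nat.add_sub_cancel, Nat.sub_zero, Nat.sub_sub, Nat.add_comm 1]

section CocycleProduct

variable {X V : Type*} [NormedAddCommGroup V] [NormedSpace ℝ V] (f : X → X)
  (A : X → (V →L[ℝ] V)ˣ)

theorem cocycle_eq_leftProd (n : ℕ) (x : X) :
    cocycle f A n x = leftProd (fun j => A (f^[j] x)) n := by
  induction n generalizing x with
  | zero => rfl
  | succ n ih => rw [leftProd_succ', cocycle, ih]; rfl

theorem cocycle_val_eq_leftProd (n : ℕ) (x : X) :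
    (cocycle f A n x).val = leftProd (fun j => (A (f^[j] x)).val) n := by
  rw [cocycle_eq_leftProd]; exact map_leftProd (Units.coeHom _) _ _

theorem cocycle_inv_val_eq_leftProd (n : ℕ) (x : X) :
    ((cocycle f A n x)⁻¹ : (V →L[ℝ] V)ˣ).val =
      leftProd (fun j => ((A (f^[n - 1 - j] x))⁻¹ : (V →L[ℝ] V)ˣ).val) n := by
  rw [cocycle_eq_leftProd, leftProd_inv]; exact map_leftProd (Units.coeHom _) _ _

end CocycleProduct

section Perturbation

variable {𝕜 E : Type*} [NontriviallyNormedField 𝕜] [SeminormedAddCommGroup E] [NormedSpace 𝕜 E]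
  {B C : ℕ → E →L[𝕜] E} {N : ℕ → E → ℝ} {L η : ℕ → ℝ} {lam : ℝ} {n : ℕ}

theorem apply_shifted_leftProd_le (hlam : 0 ≤ lam)
    (hB : ∀ j < n, ∀ v, N (j + 1) (B j v) ≤ lam * N j v) {i m : ℕ} (him : i + m ≤ n) (v : E) :
    N (i + m) (leftProd (fun j => B (i + j)) m v) ≤ lam ^ m * N i v := by
  induction m with
  | zero => simp
  | succ m ih =>
    calc N (i + m + 1) (B (i + m) (leftProd (fun j => B (i + j)) m v))
        ≤ lam * N (i + m) (leftProd (fun j => B (i + j)) m v) := hB _ (by omega) _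
      _ ≤ lam * (lam ^ m * N i v) := by gcongr; exact ih (by omega)
      _ = lam ^ (m + 1) * N i v := by ring

theorem norm_shifted_leftProd_leftProd_le (hlam : 0 ≤ lam) (hL : ∀ j, 0 ≤ L j)
    (hN : ∀ j ≤ n, ∀ v, ‖v‖ ≤ N j v ∧ N j v ≤ L j * ‖v‖)
    (hB : ∀ j < n, ∀ v, N (j + 1) (B j v) ≤ lam * N j v) (hC : ∀ j < n, ‖C j - B j‖ ≤ η j)
    {i m : ℕ} (him : i + m ≤ n) (u : E) :
    ‖leftProd (fun j => B (i + j)) m (leftProd C i u)‖ ≤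
      lam ^ m * ((∏ j ∈ range i, (lam + L (j + 1) * η j)) * (L 0 * ‖u‖)) := by
  induction i generalizing m with
  | zero =>
    calc ‖leftProd (fun j => B (0 + j)) m u‖
        ≤ N (0 + m) (leftProd (fun j => B (0 + j)) m u) := (hN _ him _).1
      _ ≤ lam ^ m * N 0 u := apply_shifted_leftProd_le hlam hB him u
      _ ≤ lam ^ m * (L 0 * ‖u‖) := by gcongr; exact (hN 0 (by omega) u).2
      _ = _ := by simp
  | succ i ih =>
    set w := leftProd C i u
    set a := (∏ j ∈ range i, (lam + L (j + 1) * η j)) * (L 0 * ‖u‖)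
    have hη : 0 ≤ η i := (norm_nonneg _).trans (hC i (by omega))
    have hw : ‖w‖ ≤ a := by simpa using ih (m := 0) (by omega)
    have hstep : leftProd (fun j => B (i + j)) (m + 1) =
        leftProd (fun j => B (i + 1 + j)) m * B i := by
      rw [leftProd_succ']; simp only [add_zero, Nat.add_right_comm i 1]; rfl
    have hmain : ‖leftProd (fun j => B (i + 1 + j)) m (B i w)‖ ≤ lam ^ (m + 1) * a := by
      simpa [hstep] using ih (m := m + 1) (by omega)
    have hdefect : ‖leftProd (fun j => B (i + 1 + j)) m ((C i - B i) w)‖ ≤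
        lam ^ m * (L (i + 1) * η i * a) :=
      calc _ ≤ N (i + 1 + m) (leftProd (fun j => B (i + 1 + j)) m ((C i - B i) w)) :=
            (hN _ him _).1
        _ ≤ lam ^ m * N (i + 1) ((C i - B i) w) := apply_shifted_leftProd_le hlam hB him _
        _ ≤ lam ^ m * (L (i + 1) * (η i * ‖w‖)) := by
            refine mul_le_mul_of_nonneg_left ((hN _ (by omega) _).2.trans ?_) (by positivity)
            exact mul_le_mul_of_nonneg_left (((C i - B i).le_opNorm w).trans
              (by gcongr; exact hC i (by omega))) (hL _)
        _ ≤ lam ^ m * (L (i + 1) * η i * a) := by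
            rw [mul_assoc (L (i + 1))]; gcongr; exact hL _
    calc ‖leftProd (fun j => B (i + 1 + j)) m (C i w)‖
        = ‖leftProd (fun j => B (i + 1 + j)) m (B i w) +
            leftProd (fun j => B (i + 1 + j)) m ((C i - B i) w)‖ := by
          rw [← map_add, sub_apply, add_sub_cancel]
      _ ≤ lam ^ (m + 1) * a + lam ^ m * (L (i + 1) * η i * a) := norm_add_le_of_le hmain hdefect
      _ = _ := by rw [prod_range_succ]; ring

theorem norm_leftProd_le_of_perturbation (hlam : 0 ≤ lam) (hL : ∀ j, 0 ≤ L j)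
    (hN : ∀ j ≤ n, ∀ v, ‖v‖ ≤ N j v ∧ N j v ≤ L j * ‖v‖)
    (hB : ∀ j < n, ∀ v, N (j + 1) (B j v) ≤ lam * N j v) (hC : ∀ j < n, ‖C j - B j‖ ≤ η j)
    {i : ℕ} (hi : i ≤ n) :
    ‖leftProd C i‖ ≤ (∏ j ∈ range i, (lam + L (j + 1) * η j)) * L 0 := by
  have hη : ∀ j < n, 0 ≤ η j := fun j hj => (norm_nonneg _).trans (hC j hj)
  refine ContinuousLinearMap.opNorm_le_bound _ ?_ fun u => ?_
  · exact mul_nonneg (prod_nonneg fun j hj =>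
      add_nonneg hlam (mul_nonneg (hL _) (hη j ((mem_range.mp hj).trans_le hi)))) (hL 0)
  · simpa [mul_assoc] using norm_shifted_leftProd_leftProd_le hlam hL hN hB hC (m := 0) hi u

end Perturbation

theorem prod_exp_add_le {ι : Type*} {s : Finset ι} {κ : ℝ} {x y : ι → ℝ}
    (hx : ∀ j ∈ s, 0 ≤ x j ∧ x j ≤ exp κ * y j) :
    ∏ j ∈ s, (exp κ + x j) ≤ exp (s.card * κ + ∑ j ∈ s, y j) := by
  rw [exp_add, exp_sum, exp_nat_mul, ← prod_const, ← prod_mul_distrib]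
  refine prod_le_prod (fun j hj => add_nonneg (exp_pos κ).le (hx j hj).1) fun j hj => ?_
  calc exp κ + x j ≤ exp κ * (y j + 1) := by linarith [(hx j hj).2]
    _ ≤ exp κ * exp (y j) := by gcongr; exact add_one_le_exp _

theorem sum_pow_min_sub_le {r : ℝ} (hr0 : 0 ≤ r) (hr1 : r < 1) {i k : ℕ} (hi : i ≤ k + 1) :
    ∑ j ∈ range i, r ^ min j (k - j) ≤ 2 * (1 - r)⁻¹ := by
  have hgeom (n : ℕ) : ∑ j ∈ range n, r ^ j ≤ (1 - r)⁻¹ := by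
    have h := geom_sum_Ico_le_of_lt_one hr0 hr1 (m := 0) (n := n)
    rwa [← range_eq_Ico, pow_zero, one_div] at h
  have hmin (j : ℕ) : r ^ min j (k - j) ≤ r ^ j + r ^ (k - j) := by
    rcases min_choice j (k - j) with h | h <;> rw [h] <;>
      linarith [pow_nonneg hr0 j, pow_nonneg hr0 (k - j)]
  have hreflect : ∑ j ∈ range i, r ^ (k - j) ≤ ∑ j ∈ range (k + 1), r ^ j := by
    rw [← sum_range_reflect (r ^ ·) (k + 1)]
    exact sum_le_sum_of_subset_of_nonneg (range_subset_range.mpr hi) fun j _ _ => by positivity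
  calc ∑ j ∈ range i, r ^ min j (k - j)
      ≤ ∑ j ∈ range i, r ^ j + ∑ j ∈ range i, r ^ (k - j) := by
        rw [← sum_add_distrib]; exact sum_le_sum fun j _ => hmin j
    _ ≤ (1 - r)⁻¹ + (1 - r)⁻¹ := add_le_add (hgeom i) (hreflect.trans (hgeom (k + 1)))
    _ = 2 * (1 - r)⁻¹ := (two_mul _).symm

theorem mul_rpow_le_of_le_mul_exp {M α δ γ d t : ℝ} (hα : 0 ≤ α) (hd0 : 0 ≤ d)
    (hd : d ≤ δ * exp (-γ * t)) : M * d ^ α ≤ max M 0 * δ ^ α * exp (-(α * γ) * t) := by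
  have hδ : 0 ≤ δ := nonneg_of_mul_nonneg_left (hd0.trans hd) (exp_pos _)
  calc M * d ^ α ≤ max M 0 * d ^ α := by gcongr; exact le_max_left M 0
    _ ≤ max M 0 * (δ * exp (-γ * t)) ^ α := by gcongr
    _ = max M 0 * δ ^ α * exp (-(α * γ) * t) := by
        rw [mul_rpow hδ (exp_pos _).le, ← exp_mul]; ring_nf

section Cocycle

variable {X V : Type*} [MetricSpace X] [NormedAddCommGroup V] [NormedSpace ℝ V]
  {f : X → X} {A : X → (V →L[ℝ] V)ˣ} {α γ ε M ℓ δ c : ℝ} {k : ℕ} {x p : X} {N : ℕ → V → ℝ}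

theorem norm_sub_le_of_holder_of_dist_le {F : X → V →L[ℝ] V} (hα : 0 ≤ α)
    (hHolder : ∀ y z, ‖F y - F z‖ ≤ M * dist y z ^ α)
    (hdist : ∀ i ≤ k, dist (f^[i] x) (f^[i] p) ≤ δ * exp (-γ * ((min i (k - i) : ℕ) : ℝ)))
    {j : ℕ} (hj : j ≤ k) :
    ‖F (f^[j] p) - F (f^[j] x)‖ ≤
      max M 0 * δ ^ α * exp (-(α * γ) * ((min j (k - j) : ℕ) : ℝ)) :=
  (hHolder _ _).trans <|
    mul_rpow_le_of_le_mul_exp hα dist_nonneg (by rw [dist_comm]; exact hdist j hj)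

theorem norm_cocycle_le (lp : ℝ) (hα : 0 ≤ α) (hε : 0 ≤ ε) (hℓ : 0 ≤ ℓ) (hδ : 0 ≤ δ)
    (hHolder : ∀ y z, ‖(A y).val - (A z).val‖ ≤ M * dist y z ^ α)
    (hdist : ∀ i ≤ k, dist (f^[i] x) (f^[i] p) ≤ δ * exp (-γ * ((min i (k - i) : ℕ) : ℝ)))
    (hN : ∀ i ≤ k, ∀ u, ‖u‖ ≤ N i u ∧ N i u ≤ ℓ * exp (ε * ((min i (k - i) : ℕ) : ℝ)) * ‖u‖)
    (hNA : ∀ i < k, ∀ u, N (i + 1) ((A (f^[i] x)).val u) ≤ exp (lp + ε) * N i u)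
    {i : ℕ} (hi : i ≤ k)
    (hc : max M 0 * exp (-lp) * ∑ j ∈ range i, exp (-(α * γ - ε)) ^ min j (k - j) ≤ c) :
    ‖(cocycle f A i p).val‖ ≤ ℓ * exp (c * ℓ * δ ^ α) * exp (i * (lp + ε)) := by
  have hperturb := norm_leftProd_le_of_perturbation (exp_pos (lp + ε)).le (fun _ => by positivity)
    hN hNA (fun j hj => norm_sub_le_of_holder_of_dist_le hα hHolder hdist hj.le) hi
  set y : ℕ → ℝ := fun j => max M 0 * exp (-lp) * ℓ * δ ^ α * exp (-(α * γ - ε)) ^ min j (k - j)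
  have hterm (j : ℕ) : ℓ * exp (ε * ((min (j + 1) (k - (j + 1)) : ℕ) : ℝ)) *
      (max M 0 * δ ^ α * exp (-(α * γ) * ((min j (k - j) : ℕ) : ℝ))) ≤ exp (lp + ε) * y j := by
    have hmin : ((min (j + 1) (k - (j + 1)) : ℕ) : ℝ) ≤ ((min j (k - j) : ℕ) : ℝ) + 1 := by
      exact_mod_cast (by omega : min (j + 1) (k - (j + 1)) ≤ min j (k - j) + 1)
    have hexp : exp (ε * ((min (j + 1) (k - (j + 1)) : ℕ) : ℝ)) *
        exp (-(α * γ) * ((min j (k - j) : ℕ) : ℝ)) ≤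
        exp (lp + ε) * exp (-lp) * exp (-(α * γ - ε)) ^ min j (k - j) := by
      rw [← exp_nat_mul, ← exp_add, ← exp_add, ← exp_add, exp_le_exp]
      nlinarith
    calc _ = max M 0 * ℓ * δ ^ α * (exp (ε * ((min (j + 1) (k - (j + 1)) : ℕ) : ℝ)) *
          exp (-(α * γ) * ((min j (k - j) : ℕ) : ℝ))) := by ring
      _ ≤ max M 0 * ℓ * δ ^ α * (exp (lp + ε) * exp (-lp) *
          exp (-(α * γ - ε)) ^ min j (k - j)) := by gcongr
      _ = _ := by simp only [y]; ring
  have hsum : ∑ j ∈ range i, y j ≤ c * ℓ * δ ^ α := by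
    rw [← mul_sum]
    calc _ = (max M 0 * exp (-lp) * ∑ j ∈ range i, exp (-(α * γ - ε)) ^ min j (k - j)) *
          (ℓ * δ ^ α) := by ring
      _ ≤ c * (ℓ * δ ^ α) := by gcongr
      _ = c * ℓ * δ ^ α := by ring
  rw [cocycle_val_eq_leftProd]
  calc _ ≤ _ := hperturb
    _ ≤ exp (i * (lp + ε) + ∑ j ∈ range i, y j) * ℓ := by
      simp only [Nat.sub_zero, Nat.zero_min, Nat.cast_zero, mul_zero, exp_zero, mul_one]
      gcongr
      simpa using prod_exp_add_le (s := range i) fun j _ => ⟨by positivity, hterm j⟩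
    _ ≤ _ := by
      rw [mul_comm]
      simp only [mul_assoc, ← exp_add]
      gcongr ℓ * exp ?_
      linarith

theorem norm_cocycle_inv_le (lm : ℝ) (hα : 0 ≤ α) (hℓ : 0 ≤ ℓ) (hδ : 0 ≤ δ)
    (hHolder : ∀ y z,
      ‖((A y)⁻¹ : (V →L[ℝ] V)ˣ).val - ((A z)⁻¹ : (V →L[ℝ] V)ˣ).val‖ ≤ M * dist y z ^ α)
    (hdist : ∀ i ≤ k, dist (f^[i] x) (f^[i] p) ≤ δ * exp (-γ * ((min i (k - i) : ℕ) : ℝ)))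
    (hN : ∀ i ≤ k, ∀ u, ‖u‖ ≤ N i u ∧ N i u ≤ ℓ * exp (ε * ((min i (k - i) : ℕ) : ℝ)) * ‖u‖)
    (hNA : ∀ i < k, ∀ u,
      N i (((A (f^[i] x))⁻¹ : (V →L[ℝ] V)ˣ).val u) ≤ exp (-lm + ε) * N (i + 1) u)
    {i : ℕ} (hi : i ≤ k)
    (hc : max M 0 * exp (lm - ε) * ∑ j ∈ range i, exp (-(α * γ - ε)) ^ min j (k - j) ≤ c) :
    ‖((cocycle f A i p)⁻¹ : (V →L[ℝ] V)ˣ).val‖ ≤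
      ℓ * exp (ε * ((min i (k - i) : ℕ) : ℝ)) * exp (c * ℓ * δ ^ α) * exp (i * (-lm + ε)) := by
  have hperturb := norm_leftProd_le_of_perturbation (n := i) (N := fun j => N (i - j))
    (exp_pos (-lm + ε)).le (fun _ => by positivity) (fun j hj => hN (i - j) (by omega))
    (fun j hj v => by
      rw [show i - (j + 1) = i - 1 - j by omega, show i - j = i - 1 - j + 1 by omega]
      exact hNA _ (by omega) v)
    (fun j hj => norm_sub_le_of_holder_of_dist_le (F := fun y => ((A y)⁻¹ : (V →L[ℝ] V)ˣ).val)
      hα hHolder hdist (j := i - 1 - j) (by omega)) le_rfl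
  set y : ℕ → ℝ := fun j =>
    max M 0 * exp (lm - ε) * ℓ * δ ^ α * exp (-(α * γ - ε)) ^ min (i - 1 - j) (k - (i - 1 - j))
  have hterm (j : ℕ) : ℓ * exp (ε * ((min (i - (j + 1)) (k - (i - (j + 1))) : ℕ) : ℝ)) *
      (max M 0 * δ ^ α * exp (-(α * γ) * ((min (i - 1 - j) (k - (i - 1 - j)) : ℕ) : ℝ))) ≤
      exp (-lm + ε) * y j := by
    rw [show i - (j + 1) = i - 1 - j by omega]
    set m := min (i - 1 - j) (k - (i - 1 - j))
    have hexp : exp (ε * (m : ℝ)) * exp (-(α * γ) * (m : ℝ)) =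
        exp (-lm + ε) * exp (lm - ε) * exp (-(α * γ - ε)) ^ m := by
      rw [← exp_nat_mul, ← exp_add, ← exp_add, ← exp_add]; ring_nf
    refine le_of_eq ?_
    calc _ = max M 0 * ℓ * δ ^ α * (exp (ε * (m : ℝ)) * exp (-(α * γ) * (m : ℝ))) := by ring
      _ = _ := by rw [hexp]; ring
  have hsum : ∑ j ∈ range i, y j ≤ c * ℓ * δ ^ α := by
    rw [← mul_sum, sum_range_reflect (fun j => exp (-(α * γ - ε)) ^ min j (k - j))]
    calc _ = (max M 0 * exp (lm - ε) * ∑ j ∈ range i, exp (-(α * γ - ε)) ^ min j (k - j)) *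
          (ℓ * δ ^ α) := by ring
      _ ≤ c * (ℓ * δ ^ α) := by gcongr
      _ = c * ℓ * δ ^ α := by ring
  rw [cocycle_inv_val_eq_leftProd]
  calc _ ≤ _ := hperturb
    _ ≤ exp (i * (-lm + ε) + ∑ j ∈ range i, y j) * (ℓ * exp (ε * ((min i (k - i) : ℕ) : ℝ))) := by
      simp only [Nat.sub_zero]
      gcongr
      simpa using prod_exp_add_le (s := range i) fun j _ => ⟨by positivity, hterm j⟩
    _ ≤ _ := by
      rw [mul_comm]
      simp only [mul_assoc, ← exp_add]
      gcongr ℓ * exp ?_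
      linarith

end Cocycle

theorem norm_estimates_along_pseudo_orbit_general {X V : Type*} [MetricSpace X]
    [NormedAddCommGroup V] [NormedSpace ℝ V]
    (f : X → X) (A : X → (V →L[ℝ] V)ˣ)
    (α M : ℝ) (hα : 0 < α)
    (hHolder : ∀ x y : X,
      ‖(A x).val - (A y).val‖ + ‖((A x)⁻¹ : (V →L[ℝ] V)ˣ).val - ((A y)⁻¹ : (V →L[ℝ] V)ˣ).val‖ ≤
        M * dist x y ^ α)
    (lp lm ε γ : ℝ) (hε : 0 < ε) (hεαγ : ε < α * γ) :
    ∃ c > (0 : ℝ), ∀ ℓ : ℝ, 1 ≤ ℓ → ∀ δ > (0 : ℝ), ∀ k : ℕ, ∀ x p : X,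
      (∀ i : ℕ, i ≤ k →
        dist (f^[i] x) (f^[i] p) ≤ δ * Real.exp (-γ * ((min i (k - i) : ℕ) : ℝ))) →
      ∀ N : ℕ → V → ℝ,
        (∀ i : ℕ, i ≤ k → ∀ u : V,
          ‖u‖ ≤ N i u ∧ N i u ≤ ℓ * Real.exp (ε * ((min i (k - i) : ℕ) : ℝ)) * ‖u‖) →
        (∀ i : ℕ, i < k → ∀ u : V,
          N (i + 1) ((A (f^[i] x)).val u) ≤ Real.exp (lp + ε) * N i u ∧
          N i (((A (f^[i] x))⁻¹ : (V →L[ℝ] V)ˣ).val u) ≤ Real.exp (-lm + ε) * N (i + 1) u) →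
        ∀ i : ℕ, i ≤ k →
          ‖(cocycle f A i p).val‖ ≤
            ℓ * Real.exp (c * ℓ * δ ^ α) * Real.exp ((i : ℝ) * (lp + ε)) ∧
          ‖((cocycle f A i p)⁻¹ : (V →L[ℝ] V)ˣ).val‖ ≤
            ℓ * Real.exp (ε * ((min i (k - i) : ℕ) : ℝ)) * Real.exp (c * ℓ * δ ^ α) *
              Real.exp ((i : ℝ) * (-lm + ε)) := by
  have hr : exp (-(α * γ - ε)) < 1 := exp_lt_one_iff.mpr (by linarith)
  set K := max M 0 * (exp (-lp) + exp (lm - ε)) + 1 with hK_def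
  have hK : 0 < K := by positivity
  have hS : 0 < 2 * (1 - exp (-(α * γ - ε)))⁻¹ := by have := sub_pos.mpr hr; positivity
  refine ⟨K * (2 * (1 - exp (-(α * γ - ε)))⁻¹), mul_pos hK hS,
    fun ℓ hℓ δ hδ k x p hdist N hN hNA i hi => ?_⟩
  have hsum := sum_pow_min_sub_le (exp_pos _).le hr (i := i) (k := k) (by omega)
  refine ⟨norm_cocycle_le lp hα.le hε.le (by linarith) hδ.le
      (fun y z => (le_add_of_nonneg_right (norm_nonneg _)).trans (hHolder y z)) hdist hN
      (fun j hj u => (hNA j hj u).1) hi ?_,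
    norm_cocycle_inv_le lm hα.le (by linarith) hδ.le
      (fun y z => (le_add_of_nonneg_left (norm_nonneg _)).trans (hHolder y z)) hdist hN
      (fun j hj u => (hNA j hj u).2) hi ?_⟩
  · gcongr ?_ * ?_
    nlinarith [le_max_right M 0, exp_pos (lm - ε)]
  · gcongr ?_ * ?_
    nlinarith [le_max_right M 0, exp_pos (-lp)]

/-- norm estimates along a closely shadowing orbit, cf. Lemma 4.1 of
[KS17]: for an `α`-Hölder `GL(V)`-valued cocycle with `sup‖A(x)⁻¹‖ ≤ e^{−λ*}` and
`ε < αγ`, there is a constant `c > 0` (depending only on the Hölder constant `M`, `λ*`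
and `αγ − ε`) such that whenever the orbit segments of `x` and `p` of length `k` are
`δ·e^{−γ·min(i,k−i)}`-close and there are Lyapunov-like norms `N_0,…,N_k` along the orbit
of `x`, one has `‖A^i_p‖ ≤ ℓ·e^{cℓδ^α}·e^{i(λ₊+ε)}` and
`‖(A^i_p)⁻¹‖ ≤ ℓ·e^{ε·min(i,k−i)}·e^{cℓδ^α}·e^{i(−λ₋+ε)}` for `0 ≤ i ≤ k`. -/
theorem norm_estimates_along_pseudo_orbit {X V : Type*} [MetricSpace X]
    [NormedAddCommGroup V] [NormedSpace ℝ V] [CompleteSpace V]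
    (f : X → X) (hf : Function.Bijective f) (A : X → (V →L[ℝ] V)ˣ)
    (α M lamStar : ℝ) (hα : 0 < α)
    (hHolder : ∀ x y : X,
      ‖(A x).val - (A y).val‖ + ‖((A x)⁻¹ : (V →L[ℝ] V)ˣ).val - ((A y)⁻¹ : (V →L[ℝ] V)ˣ).val‖ ≤
        M * dist x y ^ α)
    (hbound : ∀ x : X, ‖((A x)⁻¹ : (V →L[ℝ] V)ˣ).val‖ ≤ Real.exp (-lamStar))
    (lp lm ε γ : ℝ) (hll : lm ≤ lp) (hε : 0 < ε) (hγ : 0 < γ) (hεαγ : ε < α * γ) :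
    ∃ c > (0 : ℝ), ∀ ℓ : ℝ, 1 ≤ ℓ → ∀ δ > (0 : ℝ), ∀ k : ℕ, ∀ x p : X,
      (∀ i : ℕ, i ≤ k →
        dist (f^[i] x) (f^[i] p) ≤ δ * Real.exp (-γ * ((min i (k - i) : ℕ) : ℝ))) →
      ∀ N : ℕ → V → ℝ,
        (∀ i : ℕ, i ≤ k → ∀ u : V,
          ‖u‖ ≤ N i u ∧ N i u ≤ ℓ * Real.exp (ε * ((min i (k - i) : ℕ) : ℝ)) * ‖u‖) →
        (∀ i : ℕ, i < k → ∀ u : V,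
          N (i + 1) ((A (f^[i] x)).val u) ≤ Real.exp (lp + ε) * N i u ∧
          N i (((A (f^[i] x))⁻¹ : (V →L[ℝ] V)ˣ).val u) ≤ Real.exp (-lm + ε) * N (i + 1) u) →
        ∀ i : ℕ, i ≤ k →
          ‖(cocycle f A i p).val‖ ≤
            ℓ * Real.exp (c * ℓ * δ ^ α) * Real.exp ((i : ℝ) * (lp + ε)) ∧
          ‖((cocycle f A i p)⁻¹ : (V →L[ℝ] V)ˣ).val‖ ≤
            ℓ * Real.exp (ε * ((min i (k - i) : ℕ) : ℝ)) * Real.exp (c * ℓ * δ ^ α) *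
              Real.exp ((i : ℝ) * (-lm + ε)) :=
  norm_estimates_along_pseudo_orbit_general f A α M hα hHolder lp lm ε γ hε hεαγ
end
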